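/- arXiv:2504.07361 — 6 statements merged into one kernel-verified Lean document; each statement's English description precedes it below -/
import Mathlib

section
/- Let (G,B) be a connected finite simple graph with nonempty boundary B such that no edge joins two boundary vertices (E(B,B)=∅), equipped with the unit weight (m ≡ 1, w ≡ 1). Then the second Steklov eigenvalue satisfies σ₂ ≥ |B| / ((|B|−1)² · d_B), where d_B = max{d(x,y) : x,y ∈ B} is the maximal graph distance between boundary vertices. -/
open Finset

variable {V : Type*}

/-- The Dirichlet energy `⟨du,du⟩ = ∑_{{x,y}∈E} (u y - u x)^2 w_{xy}` of a function `u`,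
where the edge weight `w` is symmetric and vanishes on non-adjacent pairs. -/
noncomputable def energy [Fintype V] (w : V → V → ℝ) (u : V → ℝ) : ℝ :=
  (1 / 2) * ∑ x, ∑ y, (u y - u x) ^ 2 * w x y

/-- The Dirichlet pairing `⟨du,dv⟩ = ∑_{{x,y}∈E} (u y - u x)(v y - v x) w_{xy}`. -/
noncomputable def dirPairing [Fintype V] (w : V → V → ℝ) (u v : V → ℝ) : ℝ :=
  (1 / 2) * ∑ x, ∑ y, (u y - u x) * (v y - v x) * w x y

/-- The weighted graph Laplacian `Δu(x) = (1/m_x) ∑_y (u y - u x) w_{xy}`. -/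
noncomputable def glap [Fintype V] (m : V → ℝ) (w : V → V → ℝ) (u : V → ℝ) (x : V) : ℝ :=
  (1 / m x) * ∑ y, (u y - u x) * w x y

/-- `d_B`, the maximal graph distance between two boundary vertices. -/
noncomputable def boundaryDiam (G : SimpleGraph V) (B : Finset V) : ℕ :=
  (B ×ˢ B).sup fun p => G.dist p.1 p.2

/-- `w₀`, the minimal edge weight. -/
noncomputable def minEdgeWeight (G : SimpleGraph V) (w : V → V → ℝ) : ℝ :=
  sInf {r : ℝ | ∃ x y, G.Adj x y ∧ w x y = r}

/-- `m₀`, the minimal vertex measure on the boundary. -/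
noncomputable def minBoundaryMeasure (B : Finset V) (m : V → ℝ) : ℝ :=
  sInf {r : ℝ | ∃ x ∈ B, m x = r}

/-- The second Steklov eigenvalue `σ₂`, via its variational characterization: the infimum of
the Rayleigh quotients `E(u)/⟨u,u⟩_B` over functions `u` on `V` whose boundary values are
nonzero and have weighted mean zero.  (Since the harmonic extension minimizes the Dirichlet
energy among all extensions of given boundary data, this agrees with the second eigenvalue of
the Steklov operator.) -/
noncomputable def sigma2 [Fintype V] (B : Finset V) (m : V → ℝ) (w : V → V → ℝ) : ℝ :=
  sInf {r : ℝ | ∃ u : V → ℝ, (∃ x ∈ B, u x ≠ 0) ∧ (∑ x ∈ B, u x * m x = 0) ∧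
    r = energy w u / ∑ x ∈ B, (u x) ^ 2 * m x}

/-!
For boundary data `u` of mean zero, `∑_{x,y ∈ B} (u y - u x)² = 2 |B| ∑_{x ∈ B} (u x)²`.
Each of the `|B| (|B| - 1)` off-diagonal terms is bounded by `d_B · E(u)`: telescope `u` along a
shortest path and apply Cauchy–Schwarz, the squared increments along a path being part of the
energy. Hence `σ₂ ≥ 2 / ((|B| - 1) d_B)`, which is at least `|B| / ((|B| - 1)² d_B)` once
`|B| ≥ 2`; for `|B| ≤ 1` both sides vanish, `σ₂` being an infimum over the empty set.
-/

namespace Finset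

variable {ι : Type*}

theorem sum_sum_sq_sub_eq (s : Finset ι) (f : ι → ℝ) :
    ∑ x ∈ s, ∑ y ∈ s, (f y - f x) ^ 2 =
      2 * (#s * ∑ x ∈ s, f x ^ 2 - (∑ x ∈ s, f x) ^ 2) := by
  simp only [sub_sq, sum_add_distrib, sum_sub_distrib, ← mul_sum, ← sum_mul, sum_const,
    nsmul_eq_mul]
  ring

theorem sum_sum_sq_sub_le {s : Finset ι} {f : ι → ℝ} {M : ℝ}
    (h : ∀ x ∈ s, ∀ y ∈ s, (f y - f x) ^ 2 ≤ M) :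
    ∑ x ∈ s, ∑ y ∈ s, (f y - f x) ^ 2 ≤ #s * (#s - 1) * M := by
  classical
  calc ∑ x ∈ s, ∑ y ∈ s, (f y - f x) ^ 2
      = ∑ x ∈ s, ∑ y ∈ s.erase x, (f y - f x) ^ 2 :=
        sum_congr rfl fun x _ => (sum_erase _ (by simp)).symm
    _ ≤ ∑ _x ∈ s, (#s - 1 : ℝ) * M := by
        refine sum_le_sum fun x hx => ?_
        rw [← Nat.cast_pred (card_pos.2 ⟨x, hx⟩), ← card_erase_of_mem hx, ← nsmul_eq_mul]
        exact sum_le_card_nsmul _ _ _ fun y hy => h x hx y (mem_of_mem_erase hy)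
    _ = #s * (#s - 1) * M := by rw [sum_const, nsmul_eq_mul, mul_assoc]

end Finset

namespace SimpleGraph

variable {G : SimpleGraph V}

theorem Walk.sub_eq_sum_darts {α : Type*} [AddCommGroup α] (u : V → α) {x y : V}
    (p : G.Walk x y) : u y - u x = (p.darts.map fun d => u d.snd - u d.fst).sum := by
  induction p with
  | nil => simp
  | cons h p ih => rw [darts_cons, List.map_cons, List.sum_cons, ← ih]; abel

theorem Walk.IsTrail.symm_notMem_darts {x y : V} {p : G.Walk x y} (hp : p.IsTrail)
    {d : G.Dart} (hd : d ∈ p.darts) : d.symm ∉ p.darts := fun hd' =>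
  d.symm_ne (List.inj_on_of_nodup_map hp.edges_nodup hd' hd (Dart.edge_symm d))

theorem Walk.IsTrail.two_mul_sum_darts_le [Fintype V] [DecidableEq V] [DecidableRel G.Adj]
    {x y : V} {p : G.Walk x y} (hp : p.IsTrail) {f : G.Dart → ℝ} (hf : ∀ d, 0 ≤ f d)
    (hsymm : ∀ d, f d.symm = f d) : 2 * ∑ d ∈ p.darts.toFinset, f d ≤ ∑ d, f d := by
  set T := p.darts.toFinset
  have hdisj : Disjoint T (T.image Dart.symm) := by
    simp only [disjoint_right, mem_image, List.mem_toFinset, T]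
    rintro _ ⟨d, hd, rfl⟩
    exact hp.symm_notMem_darts hd
  calc 2 * ∑ d ∈ T, f d = ∑ d ∈ T, f d + ∑ d ∈ T.image Dart.symm, f d := by
        rw [sum_image (Dart.symm_involutive.injective.injOn), two_mul]
        simp only [hsymm]
    _ = ∑ d ∈ T ∪ T.image Dart.symm, f d := (sum_union hdisj).symm
    _ ≤ ∑ d, f d := sum_le_univ_sum_of_nonneg hf

end SimpleGraph

theorem dist_le_boundaryDiam {G : SimpleGraph V} {B : Finset V} {x y : V} (hx : x ∈ B)
    (hy : y ∈ B) : G.dist x y ≤ boundaryDiam G B :=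
  le_sup (f := fun p : V × V => G.dist p.1 p.2) (b := (x, y)) (mem_product.2 ⟨hx, hy⟩)

section Energy

open SimpleGraph

variable [Fintype V] {G : SimpleGraph V} {w : V → V → ℝ}

theorem energy_nonneg (hw : ∀ x y, 0 ≤ w x y) (u : V → ℝ) : 0 ≤ energy w u :=
  mul_nonneg (by norm_num) (sum_nonneg fun x _ => sum_nonneg fun y _ =>
    mul_nonneg (sq_nonneg _) (hw x y))

theorem sum_dart_sq_le_two_mul_energy [DecidableRel G.Adj] (hw : ∀ x y, 0 ≤ w x y)
    (hw1 : ∀ x y, G.Adj x y → 1 ≤ w x y) (u : V → ℝ) :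
    ∑ d : G.Dart, (u d.snd - u d.fst) ^ 2 ≤ 2 * energy w u := by
  set F : V × V → ℝ := fun q => (u q.2 - u q.1) ^ 2 * w q.1 q.2
  calc ∑ d : G.Dart, (u d.snd - u d.fst) ^ 2 ≤ ∑ d : G.Dart, F d.toProd :=
        sum_le_sum fun d _ => le_mul_of_one_le_right (sq_nonneg _) (hw1 _ _ d.adj)
    _ = ∑ q ∈ univ.map ⟨Dart.toProd, Dart.toProd_injective⟩, F q := by
        rw [sum_map]; rfl
    _ ≤ ∑ q, F q := sum_le_univ_sum_of_nonneg fun q => mul_nonneg (sq_nonneg _) (hw _ _)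
    _ = 2 * energy w u := by rw [energy, Fintype.sum_prod_type]; ring

theorem sq_sub_le_dist_mul_energy (hw : ∀ x y, 0 ≤ w x y)
    (hw1 : ∀ x y, G.Adj x y → 1 ≤ w x y) {x y : V} (hxy : G.Reachable x y) (u : V → ℝ) :
    (u y - u x) ^ 2 ≤ G.dist x y * energy w u := by
  classical
  obtain ⟨p, hp, hlen⟩ := hxy.exists_path_of_dist
  have hnd : p.darts.Nodup := Walk.darts_nodup_of_support_nodup hp.support_nodup
  have hpath : 2 * ∑ d ∈ p.darts.toFinset, (u d.snd - u d.fst) ^ 2 ≤ 2 * energy w u :=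
    (hp.isTrail.two_mul_sum_darts_le (fun _ => sq_nonneg _) fun d => by
      simp only [Dart.symm_toProd, Prod.fst_swap, Prod.snd_swap]; ring).trans
      (sum_dart_sq_le_two_mul_energy hw hw1 u)
  calc (u y - u x) ^ 2 = (∑ d ∈ p.darts.toFinset, (u d.snd - u d.fst)) ^ 2 := by
        rw [p.sub_eq_sum_darts, List.sum_toFinset _ hnd]
    _ ≤ #p.darts.toFinset * ∑ d ∈ p.darts.toFinset, (u d.snd - u d.fst) ^ 2 :=
        sq_sum_le_card_mul_sum_sq
    _ ≤ G.dist x y * energy w u := by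
        rw [List.toFinset_card_of_nodup hnd, p.length_darts, hlen]
        gcongr
        linarith

theorem two_mul_sum_sq_le_mul_energy (hG : G.Preconnected) (hw : ∀ x y, 0 ≤ w x y)
    (hw1 : ∀ x y, G.Adj x y → 1 ≤ w x y) {B : Finset V} (hB : B.Nonempty) {u : V → ℝ}
    (hsum : ∑ x ∈ B, u x = 0) :
    2 * ∑ x ∈ B, u x ^ 2 ≤ (#B - 1) * boundaryDiam G B * energy w u := by
  have hpair : ∀ x ∈ B, ∀ y ∈ B, (u y - u x) ^ 2 ≤ boundaryDiam G B * energy w u :=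
    fun x hx y hy => (sq_sub_le_dist_mul_energy hw hw1 (hG x y) u).trans <|
      mul_le_mul_of_nonneg_right (by exact_mod_cast dist_le_boundaryDiam hx hy)
        (energy_nonneg hw u)
  have h := sum_sum_sq_sub_le hpair
  rw [sum_sum_sq_sub_eq, hsum] at h
  have hcard : (0 : ℝ) < #B := by exact_mod_cast hB.card_pos
  refine le_of_mul_le_mul_left ?_ hcard
  linarith

end Energy

section Sigma2

variable [Fintype V] {B : Finset V} {w : V → V → ℝ}

theorem sigma2_eq_zero_of_card_le_one {m : V → ℝ} (hm : ∀ x ∈ B, m x ≠ 0)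
    (hB : #B ≤ 1) :
    sigma2 B m w = 0 := by
  rw [sigma2]
  convert Real.sInf_empty
  refine Set.eq_empty_of_forall_notMem ?_
  rintro r ⟨u, ⟨x, hx, hux⟩, hsum, -⟩
  obtain rfl : B = {x} :=
    eq_singleton_iff_unique_mem.2 ⟨hx, fun y hy => card_le_one.1 hB y hy x hx⟩
  rw [sum_singleton] at hsum
  exact (mul_ne_zero hux (hm x (mem_singleton_self x))) hsum

theorem le_sigma2_one {c : ℝ} (hB : 1 < #B)
    (h : ∀ u : V → ℝ, (∃ x ∈ B, u x ≠ 0) → ∑ x ∈ B, u x = 0 →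
      c ≤ energy w u / ∑ x ∈ B, u x ^ 2) :
    c ≤ sigma2 B 1 w := by
  classical
  obtain ⟨x₁, hx₁, x₂, hx₂, hne⟩ := one_lt_card.1 hB
  refine le_csInf ⟨_, Pi.single x₁ 1 - Pi.single x₂ 1, ⟨x₁, hx₁, by simp [hne]⟩,
    by simp [sum_sub_distrib, hx₁, hx₂], rfl⟩ ?_
  rintro r ⟨u, hu, hsum, rfl⟩
  simp only [Pi.one_apply, mul_one] at hsum ⊢
  exact h u hu hsum

end Sigma2

theorem perrin_unit_weight_lower_bound_general [Fintype V]
    (G : SimpleGraph V) (hG : G.Connected)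
    (B : Finset V)
    (m : V → ℝ) (w : V → V → ℝ)
    (hm : ∀ x, m x = 1)
    (hw1 : ∀ x y, G.Adj x y → w x y = 1)
    (hw0 : ∀ x y, ¬ G.Adj x y → w x y = 0) :
    sigma2 B m w ≥ (B.card : ℝ) / (((B.card : ℝ) - 1) ^ 2 * (boundaryDiam G B : ℝ)) := by
  obtain rfl : m = 1 := funext hm
  have hw : ∀ x y, 0 ≤ w x y := fun x y => by
    by_cases h : G.Adj x y <;> simp [hw1, hw0, h]
  have hw_adj : ∀ x y, G.Adj x y → 1 ≤ w x y := fun x y h => (hw1 x y h).ge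
  rcases le_or_gt #B 1 with hB | hB
  · rw [sigma2_eq_zero_of_card_le_one (m := 1) (fun _ _ => one_ne_zero) hB]
    interval_cases #B <;> simp
  obtain ⟨x₁, hx₁, x₂, hx₂, hne⟩ := one_lt_card.1 hB
  have hD : (0 : ℝ) < boundaryDiam G B := by
    exact_mod_cast (hG.pos_dist_of_ne hne).trans_le (dist_le_boundaryDiam hx₁ hx₂)
  have hN : (2 : ℝ) ≤ #B := by exact_mod_cast hB
  refine le_sigma2_one hB fun u ⟨x, hx, hux⟩ hsum => ?_
  have hQ : 0 < ∑ x ∈ B, u x ^ 2 :=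
    sum_pos' (fun i _ => sq_nonneg (u i)) ⟨x, hx, by positivity⟩
  have key := two_mul_sum_sq_le_mul_energy hG.preconnected hw hw_adj ⟨x, hx⟩ hsum
  have hN1 : (0 : ℝ) < #B - 1 := by linarith
  rw [div_le_div_iff₀ (by positivity) hQ]
  nlinarith [mul_le_mul_of_nonneg_left key (by linarith : (0 : ℝ) ≤ #B - 1)]

/-- **Perrin's lower bound, unit weight** (Theorem 1.1, inequality).
For a connected finite graph with nonempty boundary `B`, no edge joining two boundary
vertices, equipped with the unit weight (`m ≡ 1`, `w ≡ 1` on edges), one has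
`σ₂ ≥ |B| / ((|B|-1)² d_B)`. -/
theorem perrin_unit_weight_lower_bound [Fintype V]
    (G : SimpleGraph V) (hG : G.Connected)
    (B : Finset V) (hB : B.Nonempty)
    (hBB : ∀ x ∈ B, ∀ y ∈ B, ¬ G.Adj x y)
    (m : V → ℝ) (w : V → V → ℝ)
    (hm : ∀ x, m x = 1)
    (hw1 : ∀ x y, G.Adj x y → w x y = 1)
    (hw0 : ∀ x y, ¬ G.Adj x y → w x y = 0) :
    sigma2 B m w ≥ (B.card : ℝ) / (((B.card : ℝ) - 1) ^ 2 * (boundaryDiam G B : ℝ)) :=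
  perrin_unit_weight_lower_bound_general G hG B m w hm hw1 hw0
end

section
/- Let (G,B) be a connected finite simple graph with boundary B, |B| ≥ 2, such that no edge joins two boundary vertices (E(B,B)=∅), equipped with the unit weight. If equality σ₂ = |B| / ((|B|−1)² · d_B) holds, then |B| = 2. -/
open Finset

variable {V : Type*}

/-- On a path, `getVert` is injective on indices up to the length. -/
lemma getVert_injOn' {G : SimpleGraph V} {a b : V} (p : G.Walk a b) (hp : p.IsPath) :
    ∀ i, i ≤ p.length → ∀ j, j ≤ p.length → p.getVert i = p.getVert j → i = j := by
  induction p with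
  | nil => intro i hi j hj _; simp only [SimpleGraph.Walk.length_nil, Nat.le_zero] at hi hj; omega
  | @cons u v wv h q ih =>
    rw [SimpleGraph.Walk.cons_isPath_iff] at hp
    intro i hi j hj hij
    simp only [SimpleGraph.Walk.length_cons] at hi hj
    match i, j with
    | 0, 0 => rfl
    | 0, (j+1) =>
      exfalso
      apply hp.2
      rw [SimpleGraph.Walk.mem_support_iff_exists_getVert]
      refine ⟨j, ?_, by omega⟩
      simpa [SimpleGraph.Walk.getVert_cons_succ, SimpleGraph.Walk.getVert_zero] using hij.symm
    | (i+1), 0 =>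
      exfalso
      apply hp.2
      rw [SimpleGraph.Walk.mem_support_iff_exists_getVert]
      refine ⟨i, ?_, by omega⟩
      simpa [SimpleGraph.Walk.getVert_cons_succ, SimpleGraph.Walk.getVert_zero] using hij
    | (i+1), (j+1) =>
      have := ih hp.1 i (by omega) j (by omega)
        (by simpa [SimpleGraph.Walk.getVert_cons_succ] using hij)
      omega

/-- The sum of the squared increments of `u` along a path is at most the Dirichlet energy,
for the unit weight. -/
lemma path_energy [Fintype V] {G : SimpleGraph V} (w : V → V → ℝ) (u : V → ℝ)
    (hw1 : ∀ x y, G.Adj x y → w x y = 1) (hw0 : ∀ x y, ¬ G.Adj x y → w x y = 0)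
    {a b : V} (p : G.Walk a b) (hp : p.IsPath) :
    ∑ i ∈ range p.length, (u (p.getVert (i + 1)) - u (p.getVert i)) ^ 2 ≤ energy w u := by
  classical
  let F : V × V → ℝ := fun q => (u q.2 - u q.1) ^ 2 * w q.1 q.2
  have hFnn : ∀ q : V × V, 0 ≤ F q := by
    intro q
    show 0 ≤ (u q.2 - u q.1) ^ 2 * w q.1 q.2
    rcases em (G.Adj q.1 q.2) with h | h
    · rw [hw1 _ _ h]; positivity
    · rw [hw0 _ _ h]; simp
  let ι : ℕ × Bool → V × V := fun q =>
    if q.2 then (p.getVert (q.1 + 1), p.getVert q.1) else (p.getVert q.1, p.getVert (q.1 + 1))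
  have hinj : ∀ x ∈ (range p.length) ×ˢ (Finset.univ : Finset Bool),
      ∀ y ∈ (range p.length) ×ˢ (Finset.univ : Finset Bool), ι x = ι y → x = y := by
    rintro ⟨i, bi⟩ hx ⟨j, bj⟩ hy hxy
    simp only [mem_product, mem_range] at hx hy
    have hi : i < p.length := hx.1
    have hj : j < p.length := hy.1
    have hGI := getVert_injOn' p hp
    cases bi <;> cases bj <;>
      simp only [ι, if_true, if_false, Bool.false_eq_true, Prod.mk.injEq] at hxy ⊢
    · have := hGI i (le_of_lt hi) j (le_of_lt hj) hxy.1; exact ⟨this, trivial⟩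
    · have h1 := hGI i (le_of_lt hi) (j + 1) hj hxy.1
      have h2 := hGI (i + 1) hi j (le_of_lt hj) hxy.2
      omega
    · have h1 := hGI (i + 1) hi j (le_of_lt hj) hxy.1
      have h2 := hGI i (le_of_lt hi) (j + 1) hj hxy.2
      omega
    · have := hGI i (le_of_lt hi) j (le_of_lt hj) hxy.2; exact ⟨this, trivial⟩
  have h1 : ∑ q ∈ ((range p.length) ×ˢ (Finset.univ : Finset Bool)).image ι, F q
      = ∑ x ∈ (range p.length) ×ˢ (Finset.univ : Finset Bool), F (ι x) :=
    Finset.sum_image hinj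
  have h2 : ∑ q ∈ ((range p.length) ×ˢ (Finset.univ : Finset Bool)).image ι, F q
      ≤ ∑ q : V × V, F q :=
    Finset.sum_le_sum_of_subset_of_nonneg (Finset.subset_univ _) (fun q _ _ => hFnn q)
  have h3 : ∑ x ∈ (range p.length) ×ˢ (Finset.univ : Finset Bool), F (ι x) =
      2 * ∑ i ∈ range p.length, (u (p.getVert (i + 1)) - u (p.getVert i)) ^ 2 := by
    rw [Finset.sum_product, Finset.mul_sum]
    refine Finset.sum_congr rfl fun i hi => ?_
    rw [mem_range] at hi
    have hadj : G.Adj (p.getVert i) (p.getVert (i + 1)) := p.adj_getVert_succ hi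
    rw [Fintype.sum_bool]
    have e1 : F (ι (i, true)) =
        (u (p.getVert i) - u (p.getVert (i + 1))) ^ 2 * w (p.getVert (i + 1)) (p.getVert i) := rfl
    have e2 : F (ι (i, false)) =
        (u (p.getVert (i + 1)) - u (p.getVert i)) ^ 2 * w (p.getVert i) (p.getVert (i + 1)) := rfl
    rw [e1, e2, hw1 _ _ hadj, hw1 _ _ hadj.symm]
    ring
  have h4 : ∑ q : V × V, F q = 2 * energy w u := by
    rw [energy, Fintype.sum_prod_type]
    show ∑ x, ∑ y, (u y - u x) ^ 2 * w x y = 2 * ((1/2) * ∑ x, ∑ y, (u y - u x) ^ 2 * w x y)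
    ring
  linarith

set_option maxHeartbeats 1000000 in
/-- **Rigidity of Perrin's unit-weight bound** (Theorem 1.1, equality case).
If a connected finite graph with boundary `B`, `|B| ≥ 2`, no edge joining two boundary
vertices, equipped with the unit weight, satisfies `σ₂ = |B| / ((|B|-1)² d_B)`,
then `|B| = 2`. -/
theorem perrin_unit_weight_rigidity [Fintype V]
    (G : SimpleGraph V) (hG : G.Connected)
    (B : Finset V) (hB : 2 ≤ B.card)
    (hBB : ∀ x ∈ B, ∀ y ∈ B, ¬ G.Adj x y)
    (m : V → ℝ) (w : V → V → ℝ)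
    (hm : ∀ x, m x = 1)
    (hw1 : ∀ x y, G.Adj x y → w x y = 1)
    (hw0 : ∀ x y, ¬ G.Adj x y → w x y = 0)
    (heq : sigma2 B m w = (B.card : ℝ) / (((B.card : ℝ) - 1) ^ 2 * (boundaryDiam G B : ℝ))) :
    B.card = 2 := by
  classical
  by_contra hne2
  have hn3 : 3 ≤ B.card := by omega
  have hBne : B.Nonempty := Finset.card_pos.mp (by omega)
  obtain ⟨x, hx, y, hy, hxyne⟩ := Finset.one_lt_card.mp (by omega : 1 < B.card)
  have hd1 : 1 ≤ boundaryDiam G B := by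
    have h1 : 0 < G.dist x y := hG.pos_dist_of_ne hxyne
    have h2 : G.dist x y ≤ boundaryDiam G B := by
      rw [boundaryDiam]
      exact Finset.le_sup (f := fun p => G.dist p.1 p.2) (b := (x, y)) (Finset.mem_product.mpr ⟨hx, hy⟩)
    omega
  have hn3R : (3 : ℝ) ≤ (B.card : ℝ) := by exact_mod_cast hn3
  have hd1R : (1 : ℝ) ≤ (boundaryDiam G B : ℝ) := by exact_mod_cast hd1
  have hwnn : ∀ a b, 0 ≤ w a b := by
    intro a b; rcases em (G.Adj a b) with h | h
    · rw [hw1 _ _ h]; norm_num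
    · rw [hw0 _ _ h]
  have hEnn : ∀ u : V → ℝ, 0 ≤ energy w u := by
    intro u
    have h1 : ∀ a : V, 0 ≤ ∑ b, (u b - u a) ^ 2 * w a b := fun a =>
      Finset.sum_nonneg fun b _ => mul_nonneg (sq_nonneg _) (hwnn a b)
    have h2 := Finset.sum_nonneg fun a (_ : a ∈ (Finset.univ : Finset V)) => h1 a
    rw [energy]; linarith
  -- every Rayleigh quotient is at least 4 / (n d)
  have key : ∀ r ∈ {r : ℝ | ∃ u : V → ℝ, (∃ x ∈ B, u x ≠ 0) ∧ (∑ x ∈ B, u x * m x = 0) ∧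
      r = energy w u / ∑ x ∈ B, (u x) ^ 2 * m x},
      4 / ((B.card : ℝ) * (boundaryDiam G B : ℝ)) ≤ r := by
    rintro r ⟨u, ⟨x₀', hx₀'B, hux⟩, hmean, rfl⟩
    simp only [hm, mul_one] at hmean
    have hD : ∑ z ∈ B, (u z) ^ 2 * m z = ∑ z ∈ B, (u z) ^ 2 := by simp [hm]
    have hDpos : 0 < ∑ z ∈ B, (u z) ^ 2 :=
      Finset.sum_pos' (fun i _ => sq_nonneg _) ⟨x₀', hx₀'B, by positivity⟩
    obtain ⟨x₀, hx₀B, hx₀⟩ := Finset.exists_mem_eq_sup' hBne u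
    obtain ⟨y₀, hy₀B, hy₀⟩ := Finset.exists_mem_eq_inf' hBne u
    have hub : ∀ z ∈ B, u z ≤ u x₀ := fun z hz => hx₀ ▸ Finset.le_sup' u hz
    have hlb : ∀ z ∈ B, u y₀ ≤ u z := fun z hz => hy₀ ▸ Finset.inf'_le u hz
    -- denominator bound
    have hDle : ∑ z ∈ B, (u z) ^ 2 ≤ -((B.card : ℝ) * (u x₀ * u y₀)) := by
      have h5 : ∑ z ∈ B, (u z) ^ 2 ≤ ∑ z ∈ B, ((u x₀ + u y₀) * u z - u x₀ * u y₀) := by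
        refine Finset.sum_le_sum fun z hz => ?_
        have h1 := hub z hz
        have h2 := hlb z hz
        nlinarith
      have h6 : ∑ z ∈ B, ((u x₀ + u y₀) * u z - u x₀ * u y₀)
          = (u x₀ + u y₀) * (∑ z ∈ B, u z) - (B.card : ℝ) * (u x₀ * u y₀) := by
        rw [Finset.sum_sub_distrib, ← Finset.mul_sum, Finset.sum_const, nsmul_eq_mul]
      rw [h6, hmean] at h5
      linarith
    -- energy bound via a shortest path from x₀ to y₀
    have hreach : G.Reachable x₀ y₀ := hG.preconnected x₀ y₀
    obtain ⟨p0, hp0len⟩ := hreach.exists_walk_length_eq_dist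
    have hplen : p0.bypass.length ≤ boundaryDiam G B := by
      have h1 : p0.bypass.length ≤ G.dist x₀ y₀ := hp0len ▸ p0.length_bypass_le
      have h2 : G.dist x₀ y₀ ≤ boundaryDiam G B := by
        rw [boundaryDiam]
        exact Finset.le_sup (f := fun p => G.dist p.1 p.2) (b := (x₀, y₀)) (Finset.mem_product.mpr ⟨hx₀B, hy₀B⟩)
      omega
    have htel : ∑ i ∈ range p0.bypass.length,
        (u (p0.bypass.getVert (i + 1)) - u (p0.bypass.getVert i)) = u y₀ - u x₀ := by
      rw [Finset.sum_range_sub (fun i => u (p0.bypass.getVert i))]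
      rw [SimpleGraph.Walk.getVert_length, SimpleGraph.Walk.getVert_zero]
    have hCS := sq_sum_le_card_mul_sum_sq (s := range p0.bypass.length)
      (f := fun i => u (p0.bypass.getVert (i + 1)) - u (p0.bypass.getVert i))
    rw [htel, Finset.card_range] at hCS
    have hpe := path_energy w u hw1 hw0 p0.bypass p0.bypass_isPath
    have hplenR : (p0.bypass.length : ℝ) ≤ (boundaryDiam G B : ℝ) := by exact_mod_cast hplen
    have hplen0 : (0 : ℝ) ≤ (p0.bypass.length : ℝ) := Nat.cast_nonneg _
    have hEb : (u y₀ - u x₀) ^ 2 ≤ (boundaryDiam G B : ℝ) * energy w u := by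
      calc (u y₀ - u x₀) ^ 2
          ≤ (p0.bypass.length : ℝ) * ∑ i ∈ range p0.bypass.length,
            (u (p0.bypass.getVert (i + 1)) - u (p0.bypass.getVert i)) ^ 2 := hCS
        _ ≤ (p0.bypass.length : ℝ) * energy w u := mul_le_mul_of_nonneg_left hpe hplen0
        _ ≤ (boundaryDiam G B : ℝ) * energy w u :=
            mul_le_mul_of_nonneg_right hplenR (hEnn u)
    -- combine
    rw [hD, div_le_div_iff₀ (by nlinarith) hDpos]
    have hA : (B.card : ℝ) * (u y₀ - u x₀) ^ 2
        ≤ (B.card : ℝ) * ((boundaryDiam G B : ℝ) * energy w u) :=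
      mul_le_mul_of_nonneg_left hEb (by linarith)
    have hB2 : -(4 * ((B.card : ℝ) * (u x₀ * u y₀))) ≤ (B.card : ℝ) * (u y₀ - u x₀) ^ 2 := by
      nlinarith [mul_nonneg (show (0:ℝ) ≤ (B.card : ℝ) by linarith) (sq_nonneg (u x₀ + u y₀))]
    nlinarith [hDle, hB2, hA]
  -- the Rayleigh set is nonempty
  have hmem : (energy w (fun z => if z = x then 1 else if z = y then -1 else 0) /
      ∑ z ∈ B, ((fun z => if z = x then (1:ℝ) else if z = y then -1 else 0) z) ^ 2 * m z)
      ∈ {r : ℝ | ∃ u : V → ℝ, (∃ x ∈ B, u x ≠ 0) ∧ (∑ x ∈ B, u x * m x = 0) ∧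
      r = energy w u / ∑ x ∈ B, (u x) ^ 2 * m x} := by
    refine ⟨_, ⟨x, hx, by simp⟩, ?_, rfl⟩
    simp only [hm, mul_one]
    have hfun : (fun z => if z = x then (1:ℝ) else if z = y then -1 else 0)
        = (fun z => (if z = x then (1:ℝ) else 0) + (if z = y then (-1:ℝ) else 0)) := by
      funext z
      by_cases hzx : z = x
      · subst hzx; simp [hxyne]
      · by_cases hzy : z = y
        · subst hzy; simp [hzx, Ne.symm hxyne]
        · simp [hzx, hzy]
    rw [hfun]
    rw [Finset.sum_add_distrib, Finset.sum_ite_eq' B x (fun _ => (1:ℝ)),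
      Finset.sum_ite_eq' B y (fun _ => (-1:ℝ))]
    simp [hx, hy]
  have hlow : 4 / ((B.card : ℝ) * (boundaryDiam G B : ℝ)) ≤ sigma2 B m w := by
    rw [sigma2]
    exact le_csInf ⟨_, hmem⟩ key
  rw [heq] at hlow
  have h1 : (0:ℝ) < (B.card : ℝ) * (boundaryDiam G B : ℝ) := by nlinarith
  have h2 : (0:ℝ) < ((B.card : ℝ) - 1) ^ 2 * (boundaryDiam G B : ℝ) := by nlinarith
  rw [div_le_div_iff₀ h1 h2] at hlow
  nlinarith [hlow, hn3R, hd1R, sq_nonneg ((B.card : ℝ) - 3),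
    mul_le_mul_of_nonneg_left hd1R (show (0:ℝ) ≤ ((B.card:ℝ)-3) * (3*(B.card:ℝ)-2) by nlinarith)]
end

section
/- Let (G,B,m,w) be a connected weighted finite graph with boundary, |B| ≥ 2, such that σ₂ = w₀·V_B / ((V_B − m₀)² · d_B). Then there is a unique path P : v₀ ∼ v₁ ∼ ⋯ ∼ v_{d_B} in G with v₀, v_{d_B} ∈ B (so the two boundary vertices are joined by a unique path, and it has length d_B), and moreover w_{v_{i−1}v_i} = w₀ for all i = 1, 2, …, d_B. -/
open Finset

variable {V : Type*}

/-!
Let `u` be a minimiser of the Rayleigh quotient (it exists by compactness once `u` is normalised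
and truncated to a box, which does not increase the energy), and let `a`, `b ∈ B` be points where
`u|_B` is minimal and maximal. As `u` has mean zero, `|u x| V_B ≤ (u b - u a)(V_B - m₀)` on `B`,
hence `V_B / (V_B - m₀)² ≤ (u b - u a)²`. Along a geodesic `p` from `a` to `b`, Cauchy–Schwarz and
`w ≥ w₀` give `w₀ (u b - u a)² ≤ |p| E(u) ≤ d_B σ₂`, and by hypothesis
`d_B σ₂ = w₀ V_B / (V_B - m₀)²`, so equality holds throughout. This forces `|p| = d_B`, all
weights on `p` equal to `w₀`, equal increments `t` of `u` along `p` and no variation of `u` across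
other edges. Any path from `a` to `b` must then climb `|p| t` using edges of `p` only, each at most
once, so it is `p`. Equality in the boundary estimate forces `|u| ≡ (u b - u a)(V_B - m₀) / V_B`
on `B`, so `u a = -u b` and `V_B = 2 m₀`; hence `|B| ≤ 2` and `B = {a, b}`.
-/

open SimpleGraph

theorem Finset.card_mul_eq_sum_of_sq_sum_eq {ι : Type*} {s : Finset ι} {f : ι → ℝ}
    (h : (∑ i ∈ s, f i) ^ 2 = #s * ∑ i ∈ s, f i ^ 2) (i : ι) (hi : i ∈ s) :
    #s * f i = ∑ j ∈ s, f j := by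
  have hvar : ∑ j ∈ s, (#s * f j - ∑ k ∈ s, f k) ^ 2 = 0 := by
    have : ∑ j ∈ s, (#s * f j - ∑ k ∈ s, f k) ^ 2 =
        #s * (#s * ∑ j ∈ s, f j ^ 2 - (∑ j ∈ s, f j) ^ 2) := by
      simp only [sub_sq, sum_add_distrib, sum_sub_distrib, mul_pow, ← mul_sum, ← sum_mul,
        sum_const, nsmul_eq_mul]
      ring
    rw [this, h, sub_self, mul_zero]
  have := (sum_eq_zero_iff_of_nonneg fun _ _ => sq_nonneg _).mp hvar i hi
  exact sub_eq_zero.mp (pow_eq_zero_iff two_ne_zero |>.mp this)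

theorem List.sq_sum_le_length_mul_sum_sq (l : List ℝ) :
    l.sum ^ 2 ≤ l.length * (l.map (· ^ 2)).sum := by
  simpa [← Fin.sum_univ_fun_getElem l (· ^ 2)] using
    sq_sum_le_card_mul_sum_sq (s := univ) (f := fun i : Fin l.length => l[i])

theorem List.length_mul_eq_sum_of_sq_sum_eq {l : List ℝ}
    (h : l.sum ^ 2 = l.length * (l.map (· ^ 2)).sum) (x : ℝ) (hx : x ∈ l) :
    l.length * x = l.sum := by
  obtain ⟨i, hi, rfl⟩ := List.getElem_of_mem hx
  simpa using Finset.card_mul_eq_sum_of_sq_sum_eq (s := univ)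
    (f := fun i : Fin l.length => l[i])
    (by simpa [← Fin.sum_univ_fun_getElem l (· ^ 2)] using h) ⟨i, hi⟩ (mem_univ _)

namespace SimpleGraph.Walk

variable {G : SimpleGraph V}

theorem sum_darts_sub {M : Type*} [AddCommGroup M] (f : V → M) {u v : V} (p : G.Walk u v) :
    (p.darts.map fun d => f d.snd - f d.fst).sum = f v - f u := by
  induction p with
  | nil => simp
  | cons _ _ ih => simp only [darts_cons, List.map_cons, List.sum_cons, ih]; abel

theorem sq_sub_le_length_mul_sum_sq (f : V → ℝ) {u v : V} (p : G.Walk u v) :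
    (f v - f u) ^ 2 ≤ p.length * (p.darts.map fun d => (f d.snd - f d.fst) ^ 2).sum := by
  simpa [sum_darts_sub, List.map_map, Function.comp_def] using
    List.sq_sum_le_length_mul_sum_sq (p.darts.map fun d => f d.snd - f d.fst)

theorem length_mul_sub_eq_of_sq_sub_eq (f : V → ℝ) {u v : V} (p : G.Walk u v)
    (h : (f v - f u) ^ 2 = p.length * (p.darts.map fun d => (f d.snd - f d.fst) ^ 2).sum)
    (d : G.Dart) (hd : d ∈ p.darts) : p.length * (f d.snd - f d.fst) = f v - f u := by
  simpa [sum_darts_sub] using List.length_mul_eq_sum_of_sq_sum_eq (l := p.darts.map fun d =>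
    f d.snd - f d.fst) (by simpa [sum_darts_sub, List.map_map, Function.comp_def] using h) _
    (List.mem_map_of_mem hd)

theorem sub_le_mul_length_filter (f : V → ℝ) (t : ℝ) (S : Sym2 V → Prop) [DecidablePred S]
    (hf : ∀ d : G.Dart, f d.snd - f d.fst ≤ if S d.edge then t else 0) {u v : V}
    (p : G.Walk u v) : f v - f u ≤ t * (p.edges.filter fun e => S e).length := by
  induction p with
  | nil => simp
  | @cons x y z h p ih =>
    have hd : f y - f x ≤ if S s(x, y) then t else 0 := hf ⟨(x, y), h⟩
    rw [edges_cons, List.filter_cons]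
    by_cases hS : S s(x, y)
    · simp only [hS, if_true, decide_true, List.length_cons, Nat.cast_add, Nat.cast_one] at hd ⊢
      linarith
    · simp only [hS, if_false, decide_false, Bool.false_eq_true] at hd ⊢
      linarith

theorem IsPath.eq_of_edges_subset {u v : V} {p q : G.Walk u v} (hp : p.IsPath) (hq : q.IsPath)
    (h : p.edges ⊆ q.edges) : p = q := by
  induction p with
  | nil => exact (eq_nil_iff_nil.mpr (isPath_iff_nil.mp hq)).symm
  | @cons x y z hxy p ih =>
    cases q with
    | nil => exact absurd p.end_mem_support ((cons_isPath_iff _ _).mp hp).2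
    | @cons _ y' _ hxy' q =>
      have hx : x ∉ q.support := (cons_isPath_iff _ _).mp hq |>.2
      have hxp : x ∉ p.support := (cons_isPath_iff _ _).mp hp |>.2
      have hy : y = y' := by
        have := h (List.mem_cons_self ..)
        rw [edges_cons, List.mem_cons] at this
        rcases this with he | he
        · simpa [hxy.ne'] using he
        · exact absurd (q.fst_mem_support_of_mem_edges he) hx
      subst hy
      congr
      refine ih hp.of_cons hq.of_cons fun e he => ?_
      have := h (List.mem_cons_of_mem _ he)
      rw [edges_cons, List.mem_cons] at this
      refine this.resolve_left ?_
      rintro rfl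
      exact hxp (p.fst_mem_support_of_mem_edges he)

theorem IsPath.eq_of_forall_dart_sub_le [DecidableEq V] {f : V → ℝ} {t : ℝ} (ht : 0 < t) {u v : V}
    {p q : G.Walk u v} (hp : p.IsPath) (hq : q.IsPath)
    (hf : ∀ d : G.Dart, f d.snd - f d.fst ≤ if d.edge ∈ p.edges then t else 0)
    (hfp : f v - f u = p.length * t) : q = p := by
  have hcount := q.sub_le_mul_length_filter f t (· ∈ p.edges) hf
  set l := q.edges.filter (· ∈ p.edges)
  have hsub : l.Subperm p.edges :=
    (hq.edges_nodup.filter _).subperm fun e he => by simpa using (List.mem_filter.mp he).2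
  have hlen : p.edges.length ≤ l.length := by
    rw [length_edges, ← Nat.cast_le (α := ℝ)]
    nlinarith
  refine (hp.eq_of_edges_subset hq fun e he => ?_).symm
  exact (List.mem_filter.mp ((hsub.perm_of_length_le hlen).mem_iff.mpr he)).1

theorem IsPath.eq_of_forall_darts_sub_eq [DecidableEq V] {f : V → ℝ} {t : ℝ} (ht : 0 < t) {u v : V}
    {p q : G.Walk u v} (hp : p.IsPath) (hq : q.IsPath)
    (hinc : ∀ d ∈ p.darts, f d.snd - f d.fst = t)
    (hoff : ∀ d : G.Dart, d.edge ∉ p.edges → f d.snd = f d.fst) : q = p := by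
  refine hp.eq_of_forall_dart_sub_le (f := f) ht hq (fun d => ?_) ?_
  · split_ifs with he
    · obtain ⟨d', hd', hdd'⟩ := List.mem_map.mp he
      rcases (dart_edge_eq_iff d' d).mp hdd' with rfl | rfl
      · exact (hinc _ hd').le
      · have := hinc _ hd'
        simp only [Dart.symm_toProd, Prod.fst_swap, Prod.snd_swap] at this ⊢
        linarith
    · rw [hoff d he, sub_self]
  · rw [← p.sum_darts_sub f, List.map_congr_left hinc, List.map_const', List.sum_replicate,
      length_darts, nsmul_eq_mul]

theorem sum_filter_mk_mem_edges [Fintype V] [DecidableEq V] {M : Type*} [AddCommMonoid M]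
    (F : V → V → M) {u v : V} {p : G.Walk u v} (hp : p.IsTrail) :
    ∑ z : V × V with s(z.1, z.2) ∈ p.edges, F z.1 z.2 =
      (p.darts.map fun d => F d.fst d.snd + F d.snd d.fst).sum := by
  have hfiber (d : G.Dart) :
      ∑ z : V × V with s(z.1, z.2) = d.edge, F z.1 z.2 = F d.fst d.snd + F d.snd d.fst := by
    have : ({z : V × V | s(z.1, z.2) = d.edge} : Finset _) = {d.toProd, d.toProd.swap} := by
      ext ⟨x, y⟩
      simp [Dart.edge, Prod.ext_iff]
    rw [this, sum_pair fun h => d.fst_ne_snd (congrArg Prod.fst h)]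
    rfl
  calc ∑ z : V × V with s(z.1, z.2) ∈ p.edges, F z.1 z.2
      = ∑ z : V × V with s(z.1, z.2) ∈ p.edges.toFinset, F z.1 z.2 := by simp
    _ = ∑ e ∈ p.edges.toFinset, ∑ z : V × V with s(z.1, z.2) = e, F z.1 z.2 :=
      (sum_fiberwise_eq_sum_filter _ _ _ _).symm
    _ = (p.edges.map fun e => ∑ z : V × V with s(z.1, z.2) = e, F z.1 z.2).sum :=
      List.sum_toFinset _ hp.edges_nodup
    _ = _ := by simp only [edges, List.map_map, Function.comp_def, hfiber]

theorem forall_darts_reverse {α : Type*} {w : V → V → α}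
    (hw : ∀ x y, w x y = w y x) {c : α} {a b : V} {p : G.Walk a b}
    (h : ∀ d ∈ p.darts, w d.fst d.snd = c) : ∀ d ∈ p.reverse.darts, w d.fst d.snd = c := by
  intro d hd
  rw [darts_reverse, List.mem_reverse, List.mem_map] at hd
  obtain ⟨d, hd, rfl⟩ := hd
  exact (hw _ _).trans (h d hd)

end SimpleGraph.Walk

section Energy

variable {G : SimpleGraph V} {w : V → V → ℝ}

noncomputable def walkEnergy (w : V → V → ℝ) (u : V → ℝ) {a b : V} (p : G.Walk a b) : ℝ :=
  (p.darts.map fun d => (u d.snd - u d.fst) ^ 2 * w d.fst d.snd).sum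

theorem energy_eq_walkEnergy_add [Fintype V] [DecidableEq V] (hw : ∀ x y, w x y = w y x)
    (u : V → ℝ) {a b : V} {p : G.Walk a b} (hp : p.IsTrail) :
    energy w u = walkEnergy w u p +
      1 / 2 * ∑ z : V × V with s(z.1, z.2) ∉ p.edges, (u z.2 - u z.1) ^ 2 * w z.1 z.2 := by
  rw [energy, ← Fintype.sum_prod_type', ← sum_filter_add_sum_filter_not univ
    (fun z : V × V => s(z.1, z.2) ∈ p.edges),
    Walk.sum_filter_mk_mem_edges (fun x y => (u y - u x) ^ 2 * w x y) hp, walkEnergy]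
  have (d : G.Dart) : (u d.snd - u d.fst) ^ 2 * w d.fst d.snd +
      (u d.fst - u d.snd) ^ 2 * w d.snd d.fst = 2 * ((u d.snd - u d.fst) ^ 2 * w d.fst d.snd) := by
    rw [hw d.snd]; ring
  simp only [this, List.sum_map_mul_left]
  ring

theorem walkEnergy_le_energy [Fintype V] (hw_symm : ∀ x y, w x y = w y x)
    (hw : ∀ x y, 0 ≤ w x y) (u : V → ℝ) {a b : V} {p : G.Walk a b} (hp : p.IsTrail) :
    walkEnergy w u p ≤ energy w u := by
  classical
  rw [energy_eq_walkEnergy_add hw_symm u hp, le_add_iff_nonneg_right]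
  exact mul_nonneg (by norm_num) (sum_nonneg fun z _ => mul_nonneg (sq_nonneg _) (hw _ _))

theorem eq_of_energy_eq_walkEnergy [Fintype V] (hw_symm : ∀ x y, w x y = w y x)
    (hw : ∀ x y, 0 ≤ w x y) {u : V → ℝ} {a b : V} {p : G.Walk a b} (hp : p.IsTrail)
    (h : energy w u = walkEnergy w u p) {x y : V} (hxy : 0 < w x y) (he : s(x, y) ∉ p.edges) :
    u x = u y := by
  classical
  rw [energy_eq_walkEnergy_add hw_symm u hp, add_eq_left, mul_eq_zero, sum_eq_zero_iff_of_nonneg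
    fun z _ => mul_nonneg (sq_nonneg _) (hw _ _)] at h
  have := (h.resolve_left (by norm_num)) (x, y) (by simpa using he)
  rw [mul_eq_zero, or_iff_left hxy.ne', pow_eq_zero_iff two_ne_zero, sub_eq_zero] at this
  exact this.symm

theorem SimpleGraph.Walk.mul_sum_sq_le_walkEnergy {w₀ : ℝ} (hw₀ : ∀ x y, G.Adj x y → w₀ ≤ w x y)
    (u : V → ℝ) {a b : V} (p : G.Walk a b) :
    w₀ * (p.darts.map fun d => (u d.snd - u d.fst) ^ 2).sum ≤ walkEnergy w u p := by
  rw [← List.sum_map_mul_left]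
  exact List.sum_le_sum fun d _ => by
    rw [mul_comm]; exact mul_le_mul_of_nonneg_left (hw₀ _ _ d.adj) (sq_nonneg _)

end Energy

section Rigidity

variable [Fintype V] {G : SimpleGraph V} {w : V → V → ℝ} (hw_symm : ∀ x y, w x y = w y x)
  (hw_nonneg : ∀ x y, 0 ≤ w x y) {w₀ : ℝ} (hw₀ : ∀ x y, G.Adj x y → w₀ ≤ w x y)
include hw_symm hw_nonneg hw₀

theorem SimpleGraph.Walk.IsTrail.mul_sq_sub_le_length_mul_energy (hw₀_nonneg : 0 ≤ w₀) (u : V → ℝ)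
    {a b : V} {p : G.Walk a b} (hp : p.IsTrail) :
    w₀ * (u b - u a) ^ 2 ≤ p.length * energy w u :=
  calc w₀ * (u b - u a) ^ 2
      ≤ w₀ * (p.length * (p.darts.map fun d => (u d.snd - u d.fst) ^ 2).sum) :=
        mul_le_mul_of_nonneg_left (p.sq_sub_le_length_mul_sum_sq u) hw₀_nonneg
    _ = p.length * (w₀ * (p.darts.map fun d => (u d.snd - u d.fst) ^ 2).sum) := by ring
    _ ≤ p.length * energy w u := mul_le_mul_of_nonneg_left
        ((p.mul_sum_sq_le_walkEnergy hw₀ u).trans (walkEnergy_le_energy hw_symm hw_nonneg u hp))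
        (Nat.cast_nonneg _)

theorem SimpleGraph.Walk.IsPath.weight_eq_and_unique_of_length_mul_energy_le
    (hw_pos : ∀ x y, G.Adj x y → 0 < w x y) (hw₀_pos : 0 < w₀) {u : V → ℝ} {a b : V}
    {p : G.Walk a b} (hp : p.IsPath) (hab : u a < u b)
    (h : p.length * energy w u ≤ w₀ * (u b - u a) ^ 2) :
    (∀ d ∈ p.darts, w d.fst d.snd = w₀) ∧ ∀ q : G.Walk a b, q.IsPath → q = p := by
  classical
  set L : ℝ := (p.length : ℝ)
  set S := (p.darts.map fun d => (u d.snd - u d.fst) ^ 2).sum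
  have hL : 0 < L := Nat.cast_pos.mpr <| Nat.pos_of_ne_zero fun h0 =>
    hab.ne (by rw [eq_of_length_eq_zero h0])
  have hCS := p.sq_sub_le_length_mul_sum_sq u
  have hS := mul_le_mul_of_nonneg_left (p.mul_sum_sq_le_walkEnergy hw₀ u) hL.le
  have hW := mul_le_mul_of_nonneg_left (walkEnergy_le_energy hw_symm hw_nonneg u hp.isTrail) hL.le
  have hCS_eq : (u b - u a) ^ 2 = L * S :=
    le_antisymm hCS (le_of_mul_le_mul_left (by linarith) hw₀_pos)
  have hS_eq : w₀ * S = walkEnergy w u p := by nlinarith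
  have hW_eq : energy w u = walkEnergy w u p := by nlinarith
  have hinc (d : G.Dart) (hd : d ∈ p.darts) : u d.snd - u d.fst = (u b - u a) / L :=
    eq_div_of_mul_eq hL.ne' (by rw [mul_comm]; exact p.length_mul_sub_eq_of_sq_sub_eq u hCS_eq d hd)
  have ht : 0 < (u b - u a) / L := div_pos (sub_pos.mpr hab) hL
  refine ⟨fun d hd => ?_, fun q hq => hp.eq_of_forall_darts_sub_eq ht hq hinc fun d hd =>
    (eq_of_energy_eq_walkEnergy hw_symm hw_nonneg hp.isTrail hW_eq (hw_pos _ _ d.adj) hd).symm⟩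
  by_contra hne
  have hlt : w₀ * S < walkEnergy w u p := by
    rw [← List.sum_map_mul_left]
    refine List.sum_lt_sum _ _ (fun d' _ => ?_) ⟨d, hd, ?_⟩
    · rw [mul_comm]; exact mul_le_mul_of_nonneg_left (hw₀ _ _ d'.adj) (sq_nonneg _)
    · rw [mul_comm, hinc d hd]
      exact mul_lt_mul_of_pos_left (lt_of_le_of_ne (hw₀ _ _ d.adj) (Ne.symm hne)) (by positivity)
  exact hlt.ne hS_eq

end Rigidity

section Rayleigh

variable {B : Finset V} {m : V → ℝ} {w : V → V → ℝ}

theorem energy_const_mul [Fintype V] (c : ℝ) (u : V → ℝ) :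
    energy w (fun x => c * u x) = c ^ 2 * energy w u := by
  simp only [energy, mul_sum]
  exact sum_congr rfl fun x _ => sum_congr rfl fun y _ => by ring

theorem energy_comp_le [Fintype V] (hw : ∀ x y, 0 ≤ w x y) {f : ℝ → ℝ} (hf : LipschitzWith 1 f)
    (u : V → ℝ) : energy w (f ∘ u) ≤ energy w u := by
  refine mul_le_mul_of_nonneg_left (sum_le_sum fun x _ => sum_le_sum fun y _ =>
    mul_le_mul_of_nonneg_right ?_ (hw x y)) (by norm_num)
  rw [Function.comp_apply, Function.comp_apply, sq_le_sq, ← Real.dist_eq, ← Real.dist_eq]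
  simpa using hf.dist_le_mul (u y) (u x)

theorem abs_le_sqrt_sum_inv (hm : ∀ x ∈ B, 0 < m x) {u : V → ℝ}
    (hu : ∑ x ∈ B, u x ^ 2 * m x = 1) {x : V} (hx : x ∈ B) : |u x| ≤ √(∑ y ∈ B, (m y)⁻¹) := by
  refine Real.abs_le_sqrt ?_
  calc u x ^ 2 ≤ (m x)⁻¹ := by
        rw [← one_div, le_div_iff₀ (hm x hx), ← hu]
        exact single_le_sum (f := fun y => u y ^ 2 * m y)
          (fun y hy => mul_nonneg (sq_nonneg _) (hm y hy).le) hx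
    _ ≤ ∑ y ∈ B, (m y)⁻¹ := single_le_sum (fun y hy => inv_nonneg.mpr (hm y hy).le) hx

def normalizedTests (B : Finset V) (m : V → ℝ) (R : ℝ) : Set (V → ℝ) :=
  {v | (∀ x, v x ∈ Set.Icc (-R) R) ∧ ∑ x ∈ B, v x * m x = 0 ∧ ∑ x ∈ B, v x ^ 2 * m x = 1}

theorem isCompact_normalizedTests (B : Finset V) (m : V → ℝ) (R : ℝ) :
    IsCompact (normalizedTests B m R) := by
  have : normalizedTests B m R = Set.univ.pi (fun _ => Set.Icc (-R) R) ∩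
      ({v | ∑ x ∈ B, v x * m x = 0} ∩ {v | ∑ x ∈ B, v x ^ 2 * m x = 1}) := by
    ext v
    simp only [normalizedTests, Set.mem_ofPred_eq, Set.mem_inter_iff, Set.mem_univ_pi]
  rw [this]
  exact (isCompact_univ_pi fun _ => isCompact_Icc).inter_right
    ((isClosed_eq (by fun_prop) continuous_const).inter
      (isClosed_eq (by fun_prop) continuous_const))

theorem exists_mem_normalizedTests_energy_le [Fintype V] (hm : ∀ x ∈ B, 0 < m x)
    (hw : ∀ x y, 0 ≤ w x y) {u : V → ℝ} (hu : ∃ x ∈ B, u x ≠ 0)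
    (hmean : ∑ x ∈ B, u x * m x = 0) :
    ∃ v ∈ normalizedTests B m √(∑ y ∈ B, (m y)⁻¹),
      energy w v ≤ energy w u / ∑ x ∈ B, u x ^ 2 * m x := by
  set N := ∑ x ∈ B, u x ^ 2 * m x
  set R := √(∑ y ∈ B, (m y)⁻¹)
  have hN : 0 < N := by
    obtain ⟨x, hx, hux⟩ := hu
    exact sum_pos' (fun y hy => mul_nonneg (sq_nonneg _) (hm y hy).le)
      ⟨x, hx, mul_pos (sq_pos_of_ne_zero hux) (hm x hx)⟩
  have hc : (√N)⁻¹ ^ 2 = N⁻¹ := by rw [inv_pow, Real.sq_sqrt hN.le]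
  set v₁ : V → ℝ := fun x => (√N)⁻¹ * u x
  have hv₁norm : ∑ x ∈ B, v₁ x ^ 2 * m x = 1 := by
    simp only [v₁, mul_pow, mul_assoc, ← mul_sum, hc]
    exact inv_mul_cancel₀ hN.ne'
  have hv₁mean : ∑ x ∈ B, v₁ x * m x = 0 := by simp only [v₁, mul_assoc, ← mul_sum, hmean, mul_zero]
  set clamp : ℝ → ℝ := fun t => max (-R) (min R t)
  have hclamp (x : V) (hx : x ∈ B) : clamp (v₁ x) = v₁ x := by
    obtain ⟨h₁, h₂⟩ : -R ≤ v₁ x ∧ v₁ x ≤ R := abs_le.mp (abs_le_sqrt_sum_inv hm hv₁norm hx)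
    simp only [clamp, min_eq_right h₂, max_eq_right h₁]
  refine ⟨clamp ∘ v₁, ⟨fun x => ⟨le_max_left _ _, max_le (neg_le_self (Real.sqrt_nonneg _))
    (min_le_left _ _)⟩, ?_, ?_⟩, ?_⟩
  · rw [← hv₁mean]
    exact sum_congr rfl fun x hx => by rw [Function.comp_apply, hclamp x hx]
  · rw [← hv₁norm]
    exact sum_congr rfl fun x hx => by rw [Function.comp_apply, hclamp x hx]
  · calc energy w (clamp ∘ v₁)
        ≤ energy w v₁ := energy_comp_le hw ((LipschitzWith.id.const_min R).const_max (-R)) v₁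
      _ = energy w u / N := by rw [energy_const_mul, hc, inv_mul_eq_div]

theorem exists_ne_zero_sum_mul_eq_zero [DecidableEq V] {a b : V} (ha : a ∈ B) (hb : b ∈ B)
    (hab : a ≠ b) (hmb : m b ≠ 0) :
    ∃ u : V → ℝ, (∃ x ∈ B, u x ≠ 0) ∧ ∑ x ∈ B, u x * m x = 0 :=
  ⟨Pi.single a (m b) - Pi.single b (m a), ⟨a, ha, by simpa [hab] using hmb⟩, by
    simp only [Pi.sub_apply, Pi.single_apply, sub_mul, ite_mul, zero_mul, sum_sub_distrib,
      sum_ite_eq', ha, hb, if_true]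
    ring⟩

theorem exists_energy_eq_sigma2 [Fintype V] (hm : ∀ x ∈ B, 0 < m x) (hw : ∀ x y, 0 ≤ w x y)
    (hB : 1 < #B) :
    ∃ u : V → ℝ, ∑ x ∈ B, u x * m x = 0 ∧ ∑ x ∈ B, u x ^ 2 * m x = 1 ∧
      energy w u = sigma2 B m w := by
  classical
  obtain ⟨a, ha, b, hb, hab⟩ := one_lt_card.mp hB
  obtain ⟨u₀, hu₀, hmean₀⟩ := exists_ne_zero_sum_mul_eq_zero ha hb hab (hm b hb).ne'
  obtain ⟨v₀, hv₀, -⟩ := exists_mem_normalizedTests_energy_le hm hw hu₀ hmean₀ (w := w)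
  obtain ⟨u, ⟨-, hmean, hnorm⟩, hmin⟩ := (isCompact_normalizedTests B m _).exists_isMinOn
    ⟨v₀, hv₀⟩ (by unfold energy; fun_prop : Continuous (energy w)).continuousOn
  refine ⟨u, hmean, hnorm, Eq.symm (IsLeast.csInf_eq ⟨⟨u, ?_, hmean, by rw [hnorm, div_one]⟩, ?_⟩)⟩
  · by_contra! h
    have : ∑ x ∈ B, u x ^ 2 * m x = 0 := sum_eq_zero fun x hx => by rw [h x hx]; ring
    exact zero_ne_one (this.symm.trans hnorm)
  · rintro r ⟨v, hv, hvmean, rfl⟩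
    obtain ⟨v', hv', hle⟩ := exists_mem_normalizedTests_energy_le hm hw hv hvmean (w := w)
    exact (hmin hv').trans hle

end Rayleigh

section Boundary

variable {ι : Type*} {B : Finset ι} {m u : ι → ℝ} {a b : ι} {m₀ : ℝ}

theorem abs_mul_sum_le (hm : ∀ x ∈ B, 0 < m x) (hmean : ∑ x ∈ B, u x * m x = 0)
    (hmin : ∀ x ∈ B, u a ≤ u x) (hmax : ∀ x ∈ B, u x ≤ u b) (hm₀ : ∀ x ∈ B, m₀ ≤ m x)
    {x : ι} (hx : x ∈ B) : |u x| * ∑ y ∈ B, m y ≤ (u b - u a) * (∑ y ∈ B, m y - m₀) := by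
  classical
  have hux : u x * ∑ y ∈ B, m y = ∑ y ∈ B.erase x, (u x - u y) * m y := by
    rw [sum_erase (f := fun y => (u x - u y) * m y) _ (by ring)]
    simp only [sub_mul, sum_sub_distrib, hmean, sub_zero, mul_sum]
  calc |u x| * ∑ y ∈ B, m y = |∑ y ∈ B.erase x, (u x - u y) * m y| := by
        rw [← hux, abs_mul, abs_of_nonneg (sum_nonneg fun y hy => (hm y hy).le)]
    _ ≤ ∑ y ∈ B.erase x, |u x - u y| * m y := (abs_sum_le_sum_abs _ _).trans_eq <|
        sum_congr rfl fun y hy => by rw [abs_mul, abs_of_pos (hm y (mem_of_mem_erase hy))]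
    _ ≤ ∑ y ∈ B.erase x, (u b - u a) * m y := sum_le_sum fun y hy => by
        have hy := mem_of_mem_erase hy
        refine mul_le_mul_of_nonneg_right (abs_sub_le_iff.mpr ⟨?_, ?_⟩) (hm y hy).le
        · linarith [hmax x hx, hmin y hy]
        · linarith [hmax y hy, hmin x hx]
    _ = (u b - u a) * (∑ y ∈ B, m y - m x) := by rw [← mul_sum, sum_erase_eq_sub hx]
    _ ≤ (u b - u a) * (∑ y ∈ B, m y - m₀) :=
        mul_le_mul_of_nonneg_left (by linarith [hm₀ x hx]) (by linarith [hmin x hx, hmax x hx])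

theorem sum_sq_abs_mul_sum (hnorm : ∑ x ∈ B, u x ^ 2 * m x = 1) :
    ∑ x ∈ B, (|u x| * ∑ y ∈ B, m y) ^ 2 * m x = (∑ y ∈ B, m y) ^ 2 := by
  simp only [mul_pow, sq_abs, mul_right_comm _ ((∑ y ∈ B, m y) ^ 2), ← sum_mul, hnorm, one_mul]

theorem sum_le_sq_sub_mul_sq (hm : ∀ x ∈ B, 0 < m x) (hmean : ∑ x ∈ B, u x * m x = 0)
    (hnorm : ∑ x ∈ B, u x ^ 2 * m x = 1) (hmin : ∀ x ∈ B, u a ≤ u x)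
    (hmax : ∀ x ∈ B, u x ≤ u b) (hm₀ : ∀ x ∈ B, m₀ ≤ m x) :
    ∑ y ∈ B, m y ≤ (u b - u a) ^ 2 * (∑ y ∈ B, m y - m₀) ^ 2 := by
  set V := ∑ y ∈ B, m y
  have hV : 0 ≤ V := sum_nonneg fun y hy => (hm y hy).le
  have key : V * V ≤ ((u b - u a) * (V - m₀)) ^ 2 * V :=
    calc V * V = ∑ x ∈ B, (|u x| * V) ^ 2 * m x := by rw [sum_sq_abs_mul_sum hnorm, sq]
      _ ≤ ∑ x ∈ B, ((u b - u a) * (V - m₀)) ^ 2 * m x := sum_le_sum fun x hx =>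
          mul_le_mul_of_nonneg_right (pow_le_pow_left₀ (mul_nonneg (abs_nonneg _) hV)
            (abs_mul_sum_le hm hmean hmin hmax hm₀ hx) 2) (hm x hx).le
      _ = ((u b - u a) * (V - m₀)) ^ 2 * V := by rw [← mul_sum]
  rw [← mul_pow]
  rcases hV.eq_or_lt with hV0 | hVpos
  · rw [← hV0]; positivity
  · exact le_of_mul_le_mul_right key hVpos

theorem apply_lt_apply_of_sum_sq_mul_eq_one (hm : ∀ x ∈ B, 0 < m x)
    (hmean : ∑ x ∈ B, u x * m x = 0) (hnorm : ∑ x ∈ B, u x ^ 2 * m x = 1) (hb : b ∈ B)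
    (hmin : ∀ x ∈ B, u a ≤ u x) (hmax : ∀ x ∈ B, u x ≤ u b) : u a < u b := by
  refine (hmin b hb).lt_of_ne fun hab => (sum_pos hm ⟨b, hb⟩).not_ge ?_
  simpa [hab] using sum_le_sq_sub_mul_sq hm hmean hnorm hmin hmax (m₀ := 0) fun x hx => (hm x hx).le

theorem abs_mul_sum_eq_of_sq_sub_mul_sq_le (hm : ∀ x ∈ B, 0 < m x)
    (hmean : ∑ x ∈ B, u x * m x = 0) (hnorm : ∑ x ∈ B, u x ^ 2 * m x = 1)
    (hmin : ∀ x ∈ B, u a ≤ u x) (hmax : ∀ x ∈ B, u x ≤ u b) (hm₀ : ∀ x ∈ B, m₀ ≤ m x)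
    (h : (u b - u a) ^ 2 * (∑ y ∈ B, m y - m₀) ^ 2 ≤ ∑ y ∈ B, m y) :
    ∀ x ∈ B, |u x| * ∑ y ∈ B, m y = (u b - u a) * (∑ y ∈ B, m y - m₀) := by
  intro x hx
  set V := ∑ y ∈ B, m y
  have hV : 0 ≤ V := sum_nonneg fun y hy => (hm y hy).le
  have hc : ((u b - u a) * (V - m₀)) ^ 2 = V := by
    rw [mul_pow]; exact h.antisymm (sum_le_sq_sub_mul_sq hm hmean hnorm hmin hmax hm₀)
  have hbound := abs_mul_sum_le hm hmean hmin hmax hm₀ hx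
  have hsum : ∑ x ∈ B, (|u x| * V) ^ 2 * m x = ∑ x ∈ B, ((u b - u a) * (V - m₀)) ^ 2 * m x := by
    rw [sum_sq_abs_mul_sum hnorm, ← mul_sum, hc, sq]
  have hsq := (sum_eq_sum_iff_of_le fun y hy => mul_le_mul_of_nonneg_right (pow_le_pow_left₀
    (mul_nonneg (abs_nonneg _) hV) (abs_mul_sum_le hm hmean hmin hmax hm₀ hy) 2) (hm y hy).le).mp
    hsum x hx
  exact (sq_eq_sq₀ (mul_nonneg (abs_nonneg _) hV) ((mul_nonneg (abs_nonneg _) hV).trans hbound)).mp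
    (mul_right_cancel₀ (hm x hx).ne' hsq)

theorem eq_pair_of_sq_sub_mul_sq_le [DecidableEq ι] (hm : ∀ x ∈ B, 0 < m x)
    (hmean : ∑ x ∈ B, u x * m x = 0) (hnorm : ∑ x ∈ B, u x ^ 2 * m x = 1) (ha : a ∈ B)
    (hb : b ∈ B) (hmin : ∀ x ∈ B, u a ≤ u x) (hmax : ∀ x ∈ B, u x ≤ u b)
    (hm₀ : ∀ x ∈ B, m₀ ≤ m x)
    (h : (u b - u a) ^ 2 * (∑ y ∈ B, m y - m₀) ^ 2 ≤ ∑ y ∈ B, m y) : B = {a, b} := by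
  set V := ∑ y ∈ B, m y
  have hV : 0 < V := sum_pos hm ⟨a, ha⟩
  have hext := abs_mul_sum_eq_of_sq_sub_mul_sq_le hm hmean hnorm hmin hmax hm₀ h
  have hab := apply_lt_apply_of_sum_sq_mul_eq_one hm hmean hnorm hb hmin hmax
  have habs : u a = -u b := by
    have := (hext a ha).trans (hext b hb).symm
    exact (abs_eq_abs.mp (mul_right_cancel₀ hV.ne' this)).resolve_left hab.ne
  have hV₂ : V = 2 * m₀ := by
    have := hext b hb
    rw [abs_of_pos (by linarith)] at this
    nlinarith
  have hcard : #B ≤ 2 := by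
    have hsum : (#B : ℝ) * m₀ ≤ V := by rw [← nsmul_eq_mul]; exact card_nsmul_le_sum B m m₀ hm₀
    exact_mod_cast le_of_mul_le_mul_right (hsum.trans_eq hV₂) (by linarith)
  exact (eq_of_subset_of_card_le (insert_subset ha (singleton_subset_iff.mpr hb))
    (hcard.trans_eq (card_pair (ne_of_apply_ne u hab.ne)).symm)).symm

end Boundary

section Parameters

variable {G : SimpleGraph V} {w : V → V → ℝ} {B : Finset V} {m : V → ℝ}

theorem minBoundaryMeasure_le {x : V} (hx : x ∈ B) : minBoundaryMeasure B m ≤ m x :=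
  csInf_le (B.finite_toSet.image m).bddBelow ⟨x, hx, rfl⟩

theorem finite_setOf_adj_weight [Finite V] (G : SimpleGraph V) (w : V → V → ℝ) :
    {r : ℝ | ∃ x y, G.Adj x y ∧ w x y = r}.Finite :=
  (Set.finite_range fun p : V × V => w p.1 p.2).subset fun _ ⟨x, y, _, hr⟩ => ⟨(x, y), hr⟩

theorem minEdgeWeight_le [Finite V] {x y : V} (h : G.Adj x y) : minEdgeWeight G w ≤ w x y :=
  csInf_le (finite_setOf_adj_weight G w).bddBelow ⟨x, y, h, rfl⟩

theorem minEdgeWeight_pos [Finite V] (hw : ∀ x y, G.Adj x y → 0 < w x y) {x y : V}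
    (h : G.Adj x y) : 0 < minEdgeWeight G w := by
  obtain ⟨x', y', h', hw'⟩ : minEdgeWeight G w ∈ {r : ℝ | ∃ x y, G.Adj x y ∧ w x y = r} :=
    Set.Nonempty.csInf_mem ⟨_, x, y, h, rfl⟩ (finite_setOf_adj_weight G w)
  exact hw' ▸ hw x' y' h'

theorem dist_le_boundaryDiam_s5 {a b : V} (ha : a ∈ B) (hb : b ∈ B) :
    G.dist a b ≤ boundaryDiam G B :=
  le_sup (f := fun p : V × V => G.dist p.1 p.2) (mem_product.mpr ⟨ha, hb⟩ : (a, b) ∈ B ×ˢ B)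

end Parameters

theorem rigidity_of_mul_energy_le [Fintype V] [DecidableEq V] {G : SimpleGraph V}
    {B : Finset V} {m : V → ℝ} {w : V → V → ℝ} (hm : ∀ x ∈ B, 0 < m x)
    (hw_symm : ∀ x y, w x y = w y x) (hw_nonneg : ∀ x y, 0 ≤ w x y)
    (hw_pos : ∀ x y, G.Adj x y → 0 < w x y) {w₀ m₀ : ℝ} (hw₀ : ∀ x y, G.Adj x y → w₀ ≤ w x y)
    (hw₀_pos : 0 < w₀) (hm₀ : ∀ x ∈ B, m₀ ≤ m x) {u : V → ℝ}
    (hmean : ∑ x ∈ B, u x * m x = 0) (hnorm : ∑ x ∈ B, u x ^ 2 * m x = 1) {a b : V}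
    (ha : a ∈ B) (hb : b ∈ B) (hmin : ∀ x ∈ B, u a ≤ u x) (hmax : ∀ x ∈ B, u x ≤ u b)
    {p : G.Walk a b} (hp : p.IsPath) {D : ℕ} (hD : p.length ≤ D)
    (h : D * energy w u ≤ w₀ * ((∑ x ∈ B, m x) / ((∑ x ∈ B, m x) - m₀) ^ 2)) :
    p.length = D ∧ (∀ d ∈ p.darts, w d.fst d.snd = w₀) ∧
      (∀ q : G.Walk a b, q.IsPath → q = p) ∧ B = {a, b} := by
  set V₀ := ∑ x ∈ B, m x
  have hab := apply_lt_apply_of_sum_sq_mul_eq_one hm hmean hnorm hb hmin hmax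
  have hosc := sum_le_sq_sub_mul_sq hm hmean hnorm hmin hmax hm₀
  have hgap : 0 < (V₀ - m₀) ^ 2 := (sq_nonneg _).lt_of_ne fun h0 => by
    rw [← h0, mul_zero] at hosc
    exact (sum_pos hm ⟨a, ha⟩).not_ge hosc
  have hY := mul_le_mul_of_nonneg_left ((div_le_iff₀ hgap).mpr hosc) hw₀_pos.le
  have hlow := hp.isTrail.mul_sq_sub_le_length_mul_energy hw_symm hw_nonneg hw₀ hw₀_pos.le u
  have hE : 0 < energy w u := pos_of_mul_pos_right
    ((mul_pos hw₀_pos (pow_pos (sub_pos.mpr hab) 2)).trans_le hlow) (Nat.cast_nonneg _)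
  have hLD := mul_le_mul_of_nonneg_right (Nat.cast_le (α := ℝ).mpr hD) hE.le
  refine ⟨Nat.cast_injective (R := ℝ) ((Nat.cast_le.mpr hD).antisymm
    (le_of_mul_le_mul_right (by linarith) hE)), ?_⟩
  refine (hp.weight_eq_and_unique_of_length_mul_energy_le hw_symm hw_nonneg hw₀ hw_pos hw₀_pos
    hab (by linarith)).imp_right fun huniq => ⟨huniq, ?_⟩
  refine eq_pair_of_sq_sub_mul_sq_le hm hmean hnorm ha hb hmin hmax hm₀ ?_
  exact (le_div_iff₀ hgap).mp (le_of_mul_le_mul_left (by linarith) hw₀_pos)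

/-- **Rigidity, part (2)** (Theorem 1.4 (2)).
If a connected weighted finite graph with boundary `B`, `|B| ≥ 2`, satisfies
`σ₂ = w₀ V_B / ((V_B - m₀)² d_B)`, then any two distinct boundary vertices are joined by a
unique path `P : v₀ ∼ v₁ ∼ ⋯ ∼ v_{d_B}`; moreover the path has length `d_B` and all its
edge weights equal `w₀`. -/
theorem extended_perrin_rigidity_path [Fintype V]
    (G : SimpleGraph V) (hG : G.Connected)
    (B : Finset V) (hB : 2 ≤ B.card)
    (m : V → ℝ) (w : V → V → ℝ)
    (hm : ∀ x, 0 < m x)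
    (hw_symm : ∀ x y, w x y = w y x)
    (hw_pos : ∀ x y, G.Adj x y → 0 < w x y)
    (hw_zero : ∀ x y, ¬ G.Adj x y → w x y = 0)
    (heq : sigma2 B m w =
      minEdgeWeight G w * (∑ x ∈ B, m x) /
        (((∑ x ∈ B, m x) - minBoundaryMeasure B m) ^ 2 * (boundaryDiam G B : ℝ))) :
    ∀ x₀ ∈ B, ∀ x₁ ∈ B, x₀ ≠ x₁ →
      ∃ p : G.Walk x₀ x₁, p.IsPath ∧ p.length = boundaryDiam G B ∧
        (∀ d ∈ p.darts, w d.toProd.1 d.toProd.2 = minEdgeWeight G w) ∧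
        ∀ q : G.Walk x₀ x₁, q.IsPath → q = p := by
  classical
  have hw_nonneg (x y : V) : 0 ≤ w x y := by
    by_cases h : G.Adj x y
    exacts [(hw_pos x y h).le, (hw_zero x y h).ge]
  obtain ⟨u, hmean, hnorm, hσ⟩ := exists_energy_eq_sigma2 (fun x _ => hm x) hw_nonneg hB
  have hBne : B.Nonempty := card_pos.mp (by omega)
  obtain ⟨a, ha, hmin⟩ := B.exists_min_image u hBne
  obtain ⟨b, hb, hmax⟩ := B.exists_max_image u hBne
  have hab : a ≠ b := ne_of_apply_ne u
    (apply_lt_apply_of_sum_sq_mul_eq_one (fun x _ => hm x) hmean hnorm hb hmin hmax).ne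
  obtain ⟨p, hp, hlen⟩ := hG.exists_path_of_dist a b
  have hdist := dist_le_boundaryDiam_s5 (G := G) ha hb
  have hD_pos : (0 : ℝ) < boundaryDiam G B :=
    Nat.cast_pos.mpr ((hG.pos_dist_of_ne hab).trans_le hdist)
  obtain ⟨hlen_eq, hweight, huniq, hBab⟩ := rigidity_of_mul_energy_le (fun x _ => hm x) hw_symm
    hw_nonneg hw_pos (fun _ _ => minEdgeWeight_le) (minEdgeWeight_pos hw_pos
      (p.adj_snd (p.not_nil_of_ne hab))) (fun _ => minBoundaryMeasure_le) hmean hnorm ha hb hmin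
    hmax hp (hlen ▸ hdist) (le_of_eq (by rw [hσ, heq]; field_simp))
  intro x₀ hx₀ x₁ hx₁ hne
  rw [hBab, mem_insert, mem_singleton] at hx₀ hx₁
  rcases hx₀ with rfl | rfl <;> rcases hx₁ with rfl | rfl
  · exact absurd rfl hne
  · exact ⟨p, hp, hlen_eq, hweight, huniq⟩
  · refine ⟨p.reverse, hp.reverse, by rw [Walk.length_reverse, hlen_eq],
      Walk.forall_darts_reverse hw_symm hweight, fun q hq => ?_⟩
    rw [← huniq q.reverse hq.reverse, Walk.reverse_reverse]
  · exact absurd rfl hne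
end

section
/- Let P_n be the path graph on n ≥ 2 vertices v₁ ∼ v₂ ∼ ⋯ ∼ v_n equipped with the unit weight, with boundary B = {v₁, v_n} consisting of the two end vertices. Then σ₂ = 2/(n−1); in particular equality holds in Perrin's bound σ₂ ≥ |B|/((|B|−1)²·d_B), since here |B| = 2 and d_B = n−1. -/
open Finset

variable {V : Type*}

/-!
On the path the Dirichlet energy is the sum of the squared increments `u (i+1) - u i`, so by
Cauchy–Schwarz `(u_n - u_1)² ≤ (n - 1) E(u)`. A mean-zero boundary function has `u_1 + u_n = 0`,
hence `(u_n - u_1)² = 2 (u_1² + u_n²)`, which gives `σ₂ ≥ 2/(n-1)`; the linear function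
`u i = 2 i - (n - 1)` attains this. The distance between the end vertices is `n - 1` because
each edge changes the index by one.
-/

theorem Fin.sum_univ_succ_sub_castSucc {M : Type*} [AddCommGroup M] {k : ℕ}
    (f : Fin (k + 1) → M) :
    ∑ i : Fin k, (f i.succ - f i.castSucc) = f (Fin.last k) - f 0 := by
  induction k with
  | zero => simp
  | succ k ih =>
    rw [Fin.sum_univ_castSucc]
    simp only [Fin.succ_castSucc]
    rw [ih (fun i => f i.castSucc)]
    simp

def pathWeight (n : ℕ) (i j : Fin n) : ℝ :=
  if (i : ℕ) + 1 = (j : ℕ) ∨ (j : ℕ) + 1 = (i : ℕ) then 1 else 0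

theorem energy_pathWeight {k : ℕ} (u : Fin (k + 1) → ℝ) :
    energy (pathWeight (k + 1)) u = ∑ i : Fin k, (u i.succ - u i.castSucc) ^ 2 := by
  set a : Fin (k + 1) → Fin (k + 1) → ℝ := fun x y => if (x : ℕ) + 1 = y then 1 else 0
  have hsplit : ∀ x y, pathWeight (k + 1) x y = a x y + a y x := by
    intro x y
    simp only [pathWeight, a]
    split_ifs <;> norm_num <;> omega
  have hsymm : ∑ x, ∑ y, (u y - u x) ^ 2 * a y x = ∑ x, ∑ y, (u y - u x) ^ 2 * a x y := by
    rw [Finset.sum_comm]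
    exact Finset.sum_congr rfl fun x _ => Finset.sum_congr rfl fun y _ => by ring
  have hrow : ∀ i : Fin k, ∑ y, (u y - u i.castSucc) ^ 2 * a i.castSucc y
      = (u i.succ - u i.castSucc) ^ 2 := by
    intro i
    rw [Finset.sum_eq_single i.succ]
    · simp [a]
    · intro y _ hy
      simp only [a, Fin.val_castSucc, mul_ite, mul_one, mul_zero, ite_eq_right_iff]
      intro h
      exact absurd (Fin.ext (by simpa using h.symm)) hy
    · simp
  have hlast : ∑ y, (u y - u (Fin.last k)) ^ 2 * a (Fin.last k) y = 0 :=
    Finset.sum_eq_zero fun y _ => by simp [a, y.is_lt.ne']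
  simp only [energy, hsplit, mul_add, Finset.sum_add_distrib, hsymm]
  rw [Fin.sum_univ_castSucc, hlast, Finset.sum_congr rfl fun i _ => hrow i]
  ring

theorem sq_last_sub_zero_le_mul_sum_sq {k : ℕ} (u : Fin (k + 1) → ℝ) :
    (u (Fin.last k) - u 0) ^ 2 ≤ k * ∑ i : Fin k, (u i.succ - u i.castSucc) ^ 2 := by
  have := sq_sum_le_card_mul_sum_sq (s := univ) (f := fun i : Fin k => u i.succ - u i.castSucc)
  rwa [Fin.sum_univ_succ_sub_castSucc, card_univ, Fintype.card_fin] at this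

theorem sigma2_pathWeight {k : ℕ} (hk : 0 < k) :
    sigma2 {0, Fin.last k} (fun _ => 1) (pathWeight (k + 1)) = 2 / k := by
  have hk' : (0 : ℝ) < k := by exact_mod_cast hk
  have h0 : (0 : Fin (k + 1)) ≠ Fin.last k := by simp [Fin.ext_iff, hk.ne]
  refine IsLeast.csInf_eq ⟨?_, ?_⟩
  · refine ⟨fun i => 2 * i - k, ⟨0, by simp, by simpa using hk'.ne'⟩, ?_, ?_⟩
    · simp [sum_pair h0]
      ring
    · have hstep : ∀ i : Fin k,
          ((2 * (i.succ : ℕ) - k : ℝ) - (2 * (i.castSucc : ℕ) - k)) ^ 2 = 4 := by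
        intro i
        simp only [Fin.val_succ, Fin.val_castSucc]
        push_cast
        ring
      simp only [energy_pathWeight, hstep, sum_pair h0, sum_const, card_univ, Fintype.card_fin,
        nsmul_eq_mul, Fin.val_zero, Fin.val_last, mul_one]
      field_simp
      ring
  · rintro r ⟨u, ⟨x, hx, hux⟩, hmean, rfl⟩
    simp only [sum_pair h0, mul_one] at hmean ⊢
    have hden : 0 < u 0 ^ 2 + u (Fin.last k) ^ 2 := by
      simp only [mem_insert, mem_singleton] at hx
      rcases hx with rfl | rfl <;> positivity
    rw [energy_pathWeight, div_le_div_iff₀ hk' hden]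
    nlinarith [sq_last_sub_zero_le_mul_sum_sq u]

open SimpleGraph

theorem pathGraph_walk_length_ge {n : ℕ} {i j : Fin n} (p : (pathGraph n).Walk i j) :
    (j : ℕ) ≤ i + p.length := by
  induction p with
  | nil => simp
  | cons h _ ih =>
    rw [pathGraph_adj] at h
    rw [Walk.length_cons]
    omega

theorem pathGraph_dist_zero {k : ℕ} (j : Fin (k + 1)) : (pathGraph (k + 1)).dist 0 j = j := by
  apply le_antisymm
  · induction j using Fin.induction with
    | zero => simp
    | succ j ih =>
      have hadj : (pathGraph (k + 1)).Adj j.castSucc j.succ := by simp [pathGraph_adj]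
      calc (pathGraph (k + 1)).dist 0 j.succ
          ≤ (pathGraph (k + 1)).dist 0 j.castSucc + (pathGraph (k + 1)).dist j.castSucc j.succ :=
            (pathGraph_connected k).dist_triangle
        _ ≤ j.succ := by rw [dist_eq_one_iff_adj.mpr hadj]; simpa using ih
  · obtain ⟨p, hp⟩ := (pathGraph_connected k).exists_walk_length_eq_dist 0 j
    simpa [hp] using pathGraph_walk_length_ge p

theorem boundaryDiam_pathGraph (k : ℕ) :
    boundaryDiam (pathGraph (k + 1)) {0, Fin.last k} = k := by
  apply le_antisymm
  · refine Finset.sup_le ?_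
    rintro ⟨x, y⟩ hxy
    simp only [mem_product, mem_insert, mem_singleton] at hxy
    rcases hxy with ⟨rfl | rfl, rfl | rfl⟩ <;>
      simp [pathGraph_dist_zero, dist_comm (u := Fin.last k)]
  · have hmem : ((0 : Fin (k + 1)), Fin.last k) ∈
        ({0, Fin.last k} : Finset (Fin (k + 1))) ×ˢ {0, Fin.last k} := by simp
    simpa [boundaryDiam, pathGraph_dist_zero] using
      Finset.le_sup (f := fun p : Fin (k + 1) × Fin (k + 1) => (pathGraph (k + 1)).dist p.1 p.2)
        hmem

/-- **Sharpness example: the path graph.**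
Let `P_n` be the path graph on `n ≥ 2` vertices `v₁ ∼ v₂ ∼ ⋯ ∼ v_n` with the unit weight and
boundary `B` consisting of the two end vertices.  Then `σ₂ = 2/(n-1)`; in particular, since
`|B| = 2` and `d_B = n - 1`, equality holds in Perrin's bound `σ₂ ≥ |B|/((|B|-1)² d_B)`. -/
theorem path_graph_sigma2 (n : ℕ) (hn : 2 ≤ n) :
    sigma2 ({⟨0, by omega⟩, ⟨n - 1, by omega⟩} : Finset (Fin n))
        (fun _ => (1 : ℝ))
        (fun i j => if (i : ℕ) + 1 = (j : ℕ) ∨ (j : ℕ) + 1 = (i : ℕ) then (1 : ℝ) else 0)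
      = 2 / ((n : ℝ) - 1) ∧
    boundaryDiam (SimpleGraph.pathGraph n)
        ({⟨0, by omega⟩, ⟨n - 1, by omega⟩} : Finset (Fin n)) = n - 1 := by
  obtain ⟨k, rfl⟩ : ∃ k, n = k + 1 := ⟨n - 1, by omega⟩
  have hB : ({⟨0, by omega⟩, ⟨k + 1 - 1, by omega⟩} : Finset (Fin (k + 1))) = {0, Fin.last k} :=
    rfl
  rw [hB]
  refine ⟨?_, ?_⟩
  · rw [Nat.cast_add_one, add_sub_cancel_right]
    exact sigma2_pathWeight (by omega)
  · simpa using boundaryDiam_pathGraph k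
end

section
/- Let (G,B,m,w) be a connected weighted finite graph with nonempty boundary B. Then for every f : B → ℝ there exists a unique function u_f : V → ℝ such that Δu_f(x) = 0 for all x ∈ Ω = V∖B and u_f(x) = f(x) for all x ∈ B. -/
open Finset

variable {V : Type*}

open Classical in
/-- The linear map encoding boundary values and interior Laplacian. -/
noncomputable def harmLmap [Fintype V] (B : Finset V) (w : V → V → ℝ) :
    (V → ℝ) →ₗ[ℝ] (V → ℝ) where
  toFun u x := if x ∈ B then u x else ∑ y, (u y - u x) * w x y
  map_add' u v := by
    funext x
    by_cases h : x ∈ B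
    · simp [h]
    · simp only [h, if_false, Pi.add_apply, ← Finset.sum_add_distrib]
      exact Finset.sum_congr rfl fun y _ => by ring
  map_smul' c u := by
    funext x
    by_cases h : x ∈ B
    · simp [h]
    · simp only [h, if_false, Pi.smul_apply, RingHom.id_apply, smul_eq_mul,
        Finset.mul_sum]
      exact Finset.sum_congr rfl fun y _ => by ring

lemma green_identity [Fintype V] (w : V → V → ℝ) (hw_symm : ∀ x y, w x y = w y x)
    (u : V → ℝ) :
    ∑ x, u x * ∑ y, (u y - u x) * w x y
      = -(1 / 2) * ∑ x, ∑ y, (u y - u x) ^ 2 * w x y := by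
  have h1 : ∑ x, ∑ y, u x * ((u y - u x) * w x y)
      = ∑ x, ∑ y, u y * ((u x - u y) * w x y) := by
    rw [Finset.sum_comm]
    exact Finset.sum_congr rfl fun x _ => Finset.sum_congr rfl fun y _ => by
      rw [hw_symm]
  have h2 : (2 : ℝ) * ∑ x, ∑ y, u x * ((u y - u x) * w x y)
      = ∑ x, ∑ y, -((u y - u x) ^ 2 * w x y) := by
    rw [two_mul]
    nth_rewrite 2 [h1]
    rw [← Finset.sum_add_distrib]
    refine Finset.sum_congr rfl fun x _ => ?_
    rw [← Finset.sum_add_distrib]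
    exact Finset.sum_congr rfl fun y _ => by ring
  have h3 : ∑ x, u x * ∑ y, (u y - u x) * w x y
      = ∑ x, ∑ y, u x * ((u y - u x) * w x y) := by
    exact Finset.sum_congr rfl fun x _ => Finset.mul_sum _ _ _
  have h4 : ∑ x, ∑ y, -((u y - u x) ^ 2 * w x y)
      = -∑ x, ∑ y, (u y - u x) ^ 2 * w x y := by
    simp [Finset.sum_neg_distrib]
  rw [h3]
  rw [h4] at h2
  linarith [h2]

lemma harmLmap_eq_zero [Fintype V]
    (G : SimpleGraph V) (hG : G.Connected)
    (B : Finset V) (hB : B.Nonempty) (w : V → V → ℝ)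
    (hw_symm : ∀ x y, w x y = w y x)
    (hw_pos : ∀ x y, G.Adj x y → 0 < w x y)
    (hw_zero : ∀ x y, ¬ G.Adj x y → w x y = 0)
    (u : V → ℝ) (hu : harmLmap B w u = 0) : u = 0 := by
  classical
  have hB' : ∀ x ∈ B, u x = 0 := by
    intro x hx
    have := congrFun hu x
    simpa [harmLmap, hx] using this
  have hΩ : ∀ x ∉ B, ∑ y, (u y - u x) * w x y = 0 := by
    intro x hx
    have := congrFun hu x
    simpa [harmLmap, hx] using this
  have hlhs : ∑ x, u x * ∑ y, (u y - u x) * w x y = 0 := by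
    apply Finset.sum_eq_zero
    intro x _
    by_cases hx : x ∈ B
    · rw [hB' x hx]; ring
    · rw [hΩ x hx]; ring
  have hE : ∑ x, ∑ y, (u y - u x) ^ 2 * w x y = 0 := by
    have := green_identity w hw_symm u
    rw [hlhs] at this
    linarith
  have hw_nonneg : ∀ x y, 0 ≤ w x y := by
    intro x y
    by_cases h : G.Adj x y
    · exact (hw_pos x y h).le
    · rw [hw_zero x y h]
  have hterm : ∀ x y : V, (u y - u x) ^ 2 * w x y = 0 := by
    have h1 := (Finset.sum_eq_zero_iff_of_nonneg (fun x _ =>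
      Finset.sum_nonneg fun y _ => mul_nonneg (sq_nonneg _) (hw_nonneg x y))).mp hE
    intro x y
    have h2 := (Finset.sum_eq_zero_iff_of_nonneg (fun y _ =>
      mul_nonneg (sq_nonneg _) (hw_nonneg x y))).mp (h1 x (Finset.mem_univ x))
    exact h2 y (Finset.mem_univ y)
  have hadj : ∀ x y, G.Adj x y → u x = u y := by
    intro x y h
    have := hterm x y
    rcases mul_eq_zero.mp this with h' | h'
    · have := pow_eq_zero_iff (n := 2) (by norm_num) |>.mp h'
      linarith [sub_eq_zero.mp this]
    · exact absurd h' (hw_pos x y h).ne'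
  have hconst : ∀ x y : V, u x = u y := by
    intro x y
    obtain ⟨p⟩ := hG.preconnected x y
    induction p with
    | nil => rfl
    | cons h q ih => exact (hadj _ _ h).trans ih
  obtain ⟨b, hb⟩ := hB
  funext x
  exact (hconst x b).trans (hB' b hb)

/-- **Existence and uniqueness of the harmonic extension.**
On a connected weighted finite graph with nonempty boundary `B`, every `f : B → ℝ` admits a
unique harmonic extension `u` with `Δu = 0` on `Ω = V ∖ B` and `u = f` on `B`. -/
theorem harmonic_extension_existsUnique [Fintype V]
    (G : SimpleGraph V) (hG : G.Connected)
    (B : Finset V) (hB : B.Nonempty)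
    (m : V → ℝ) (w : V → V → ℝ)
    (hm : ∀ x, 0 < m x)
    (hw_symm : ∀ x y, w x y = w y x)
    (hw_pos : ∀ x y, G.Adj x y → 0 < w x y)
    (hw_zero : ∀ x y, ¬ G.Adj x y → w x y = 0)
    (f : V → ℝ) :
    ∃! u : V → ℝ, (∀ x ∉ B, glap m w u x = 0) ∧ ∀ x ∈ B, u x = f x := by
  classical
  have hinj : Function.Injective (harmLmap B w) :=
    (injective_iff_map_eq_zero _).mpr
      (fun u hu => harmLmap_eq_zero G hG B hB w hw_symm hw_pos hw_zero u hu)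
  have hsurj : Function.Surjective (harmLmap B w) :=
    (LinearMap.injective_iff_surjective).mp hinj
  obtain ⟨u, hu⟩ := hsurj (fun x => if x ∈ B then f x else 0)
  refine ⟨u, ⟨?_, ?_⟩, ?_⟩
  · intro x hx
    have := congrFun hu x
    simp only [harmLmap, LinearMap.coe_mk, AddHom.coe_mk, hx, if_false] at this
    rw [glap, this, mul_zero]
  · intro x hx
    have := congrFun hu x
    simpa [harmLmap, hx] using this
  · intro v ⟨hv1, hv2⟩
    apply hinj
    rw [hu]
    funext x
    by_cases hx : x ∈ B
    · simp [harmLmap, hx, hv2 x hx]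
    · have h1 := hv1 x hx
      rw [glap] at h1
      have hmx : (1 : ℝ) / m x ≠ 0 := one_div_ne_zero (hm x).ne'
      have h2 : ∑ y, (v y - v x) * w x y = 0 :=
        (mul_eq_zero.mp h1).resolve_left hmx
      simp [harmLmap, hx, h2]
end

section
/- Let B be a finite set with a measure m : B → ℝ₊, V_B = Σ_{x∈B} m_x, m₀ = min_{x∈B} m_x, and |B| ≥ 2. Let f : B → ℝ satisfy Σ_{x∈B} f(x) m_x = 0 and Σ_{x∈B} f(x)² m_x = 1. Then max_{x∈B} |f(x)| ≥ 1/√V_B, and moreover max_{x∈B} f(x) − min_{x∈B} f(x) ≥ √V_B / (V_B − m₀). -/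
/-!
Since `∑ f² m = 1`, the largest value `a = |f z|` of `|f|` satisfies `a² V_B ≥ 1`. Writing the
mean-zero condition as `f z m_z = -∑_{x ≠ z} f x m_x` and bounding the right side by the extreme
values of `f` on `B` gives `a V_B ≤ (max f - min f)(V_B - m_z)`; combine with `√V_B ≤ a V_B` and
`m₀ ≤ m_z`.
-/

open Finset

variable {V : Type*}

namespace Finset

variable {ι : Type*} {s : Finset ι} {m f : ι → ℝ}

lemma sum_sq_mul_le_sq_sup'_abs_mul_sum (hm : ∀ x ∈ s, 0 ≤ m x) (hs : s.Nonempty) :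
    ∑ x ∈ s, f x ^ 2 * m x ≤ s.sup' hs (fun x => |f x|) ^ 2 * ∑ x ∈ s, m x := by
  rw [mul_sum]
  refine sum_le_sum fun x hx => mul_le_mul_of_nonneg_right ?_ (hm x hx)
  rw [← sq_abs]
  exact pow_le_pow_left₀ (abs_nonneg _) (le_sup' (fun x => |f x|) hx) 2

lemma one_div_sqrt_sum_le_sup'_abs (hm : ∀ x ∈ s, 0 ≤ m x) (hs : s.Nonempty)
    (hnorm : ∑ x ∈ s, f x ^ 2 * m x = 1) :
    1 / √(∑ x ∈ s, m x) ≤ s.sup' hs (fun x => |f x|) := by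
  set a := s.sup' hs (fun x => |f x|)
  have ha : 0 ≤ a := (abs_nonneg _).trans (le_sup' (fun x => |f x|) hs.choose_spec)
  have hsq : 1 ≤ a ^ 2 * ∑ x ∈ s, m x := hnorm ▸ sum_sq_mul_le_sq_sup'_abs_mul_sum hm hs
  refine div_le_of_le_mul₀ (Real.sqrt_nonneg _) ha ?_
  rw [← Real.sqrt_sq ha, ← Real.sqrt_mul (sq_nonneg a)]
  exact Real.one_le_sqrt.2 hsq

lemma mul_sum_le_sub_mul_sum_sub (hm : ∀ x ∈ s, 0 ≤ m x) (hmean : ∑ x ∈ s, f x * m x = 0)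
    {L M : ℝ} (hL : ∀ x ∈ s, L ≤ f x) (hM : ∀ x ∈ s, f x ≤ M) {z : ι} (hz : z ∈ s) :
    f z * ∑ x ∈ s, m x ≤ (M - L) * (∑ x ∈ s, m x - m z) := by
  classical
  have hrest : ∑ x ∈ s.erase z, m x = ∑ x ∈ s, m x - m z := sum_erase_eq_sub hz
  have hsplit : f z * m z + ∑ x ∈ s.erase z, f x * m x = 0 := by
    rwa [add_sum_erase s (fun x => f x * m x) hz]
  have hlow : L * ∑ x ∈ s.erase z, m x ≤ ∑ x ∈ s.erase z, f x * m x := by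
    rw [mul_sum]
    exact sum_le_sum fun x hx =>
      mul_le_mul_of_nonneg_right (hL x (mem_of_mem_erase hx)) (hm x (mem_of_mem_erase hx))
  have hup : f z * ∑ x ∈ s.erase z, m x ≤ M * ∑ x ∈ s.erase z, m x :=
    mul_le_mul_of_nonneg_right (hM z hz) (sum_nonneg fun x hx => hm x (mem_of_mem_erase hx))
  rw [← hrest, ← add_sum_erase s m hz]
  linarith

lemma abs_mul_sum_le_sub_mul_sum_sub (hm : ∀ x ∈ s, 0 ≤ m x) (hmean : ∑ x ∈ s, f x * m x = 0)
    {L M : ℝ} (hL : ∀ x ∈ s, L ≤ f x) (hM : ∀ x ∈ s, f x ≤ M) {z : ι} (hz : z ∈ s) :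
    |f z| * ∑ x ∈ s, m x ≤ (M - L) * (∑ x ∈ s, m x - m z) := by
  rcases abs_cases (f z) with ⟨h, -⟩ | ⟨h, -⟩
  · rw [h]
    exact mul_sum_le_sub_mul_sum_sub hm hmean hL hM hz
  · have hmean' : ∑ x ∈ s, (-f) x * m x = 0 := by
      simp only [Pi.neg_apply, neg_mul, sum_neg_distrib, hmean, neg_zero]
    rw [h, ← neg_sub_neg]
    exact mul_sum_le_sub_mul_sum_sub hm hmean' (fun x hx => neg_le_neg (hM x hx))
      (fun x hx => neg_le_neg (hL x hx)) hz

end Finset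

theorem normalized_mean_zero_estimates_general {V : Type*}
    (B : Finset V) (hne : B.Nonempty)
    (m : V → ℝ) (hm : ∀ x ∈ B, 0 < m x)
    (f : V → ℝ)
    (hmean : ∑ x ∈ B, f x * m x = 0)
    (hnorm : ∑ x ∈ B, f x ^ 2 * m x = 1) :
    1 / Real.sqrt (∑ x ∈ B, m x) ≤ B.sup' hne (fun x => |f x|) ∧
    Real.sqrt (∑ x ∈ B, m x) / ((∑ x ∈ B, m x) - B.inf' hne m)
      ≤ B.sup' hne f - B.inf' hne f := by
  have hm₀ : ∀ x ∈ B, 0 ≤ m x := fun x hx => (hm x hx).le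
  have hsup := one_div_sqrt_sum_le_sup'_abs hm₀ hne hnorm
  refine ⟨hsup, ?_⟩
  obtain ⟨z, hz, hza⟩ := B.exists_mem_eq_sup' hne fun x => |f x|
  have hmz : B.inf' hne m ≤ m z := inf'_le m hz
  have hosc : 0 ≤ B.sup' hne f - B.inf' hne f := sub_nonneg.2 ((inf'_le f hz).trans (le_sup' f hz))
  refine div_le_of_le_mul₀ (sub_nonneg.2 (hmz.trans (single_le_sum hm₀ hz))) hosc ?_
  calc √(∑ x ∈ B, m x) = 1 / √(∑ x ∈ B, m x) * ∑ x ∈ B, m x := by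
        rw [one_div_mul_eq_div, Real.div_sqrt]
    _ ≤ |f z| * ∑ x ∈ B, m x :=
        hza ▸ mul_le_mul_of_nonneg_right hsup (sum_nonneg hm₀)
    _ ≤ (B.sup' hne f - B.inf' hne f) * (∑ x ∈ B, m x - m z) :=
        abs_mul_sum_le_sub_mul_sum_sub hm₀ hmean (fun x hx => inf'_le f hx)
          (fun x hx => le_sup' f hx) hz
    _ ≤ (B.sup' hne f - B.inf' hne f) * (∑ x ∈ B, m x - B.inf' hne m) := by
        gcongr

/-- **The key estimates on normalized mean-zero boundary data.**
Let `B` be a finite set with positive measure `m`, `|B| ≥ 2`, `V_B = ∑_{x∈B} m_x`,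
`m₀ = min_{x∈B} m_x`.  If `f` satisfies `∑_{x∈B} f(x) m_x = 0` and `∑_{x∈B} f(x)² m_x = 1`,
then `max_{x∈B} |f(x)| ≥ 1/√V_B` and `max_{x∈B} f(x) - min_{x∈B} f(x) ≥ √V_B/(V_B - m₀)`. -/
theorem normalized_mean_zero_estimates {V : Type*}
    (B : Finset V) (hB : 2 ≤ B.card) (hne : B.Nonempty)
    (m : V → ℝ) (hm : ∀ x ∈ B, 0 < m x)
    (f : V → ℝ)
    (hmean : ∑ x ∈ B, f x * m x = 0)
    (hnorm : ∑ x ∈ B, f x ^ 2 * m x = 1) :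
    1 / Real.sqrt (∑ x ∈ B, m x) ≤ B.sup' hne (fun x => |f x|) ∧
    Real.sqrt (∑ x ∈ B, m x) / ((∑ x ∈ B, m x) - B.inf' hne m)
      ≤ B.sup' hne f - B.inf' hne f :=
  normalized_mean_zero_estimates_general B hne m hm f hmean hnorm
end
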